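/- arXiv:2104.12694 — 10 statements merged into one kernel-verified Lean document; each statement's English description precedes it below -/
import Mathlib

section
/- Let G and H be complex Hilbert spaces, let A, B, S be bounded operators on H with S boundedly invertible, and let Π₁, Π₂, Γ₁, Γ₂ be bounded operators from G to H satisfying AS − SB = Π₁Π₂*, SΓ₁ = Π₁, and Γ₂*S = Π₂*. Assume the minimality conditions: the closed linear span of ⋃_{n≥0} AⁿΠ₁G equals H, the closed linear span of ⋃_{n≥0} (A*)ⁿΓ₂G equals H, the closed linear span of ⋃_{n≥0} BⁿΓ₁G equals H, and the closed linear span of ⋃_{n≥0} (B*)ⁿΠ₂G equals H. Let H = L₁ ⊕ L₂ be an orthogonal decomposition with orthogonal projections P₁, P₂, suppose AP₂ = P₂AP₂ and BP₁ = P₁BP₁, and suppose S₁₁ = P₁SP₁ (as an operator on L₁) is invertible on L₁. Set A₁₁ = P₁AP₁ on L₁, A₂₂ = P₂AP₂ on L₂, and T₂₂ = P₂S⁻¹P₂ on L₂ (which is then invertible on L₂). Then for every z ∈ ℂ such that A − zI is invertible on H, A₁₁ − zI is invertible on L₁, and A₂₂ − zI is invertible on L₂, the transfer function W_A(z) = I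 − Γ₂*(A − zI)⁻¹Π₁ factors as W_A(z) = W₂(z)W₁(z), where W₁(z) = I − Π₂*P₁S₁₁⁻¹(A₁₁ − zI)⁻¹P₁Π₁ and W₂(z) = I − Γ₂*P₂(A₂₂ − zI)⁻¹T₂₂⁻¹P₂Γ₁. -/
/-!
With respect to `H = L₁ ⊕ L₂`, `A - zI` is block lower triangular, so its resolvent is
`N₁ + N₂ - N₂ (A - zI) N₁`, where `N₁`, `N₂` are the resolvents of the diagonal blocks. The inverse of
the `L₂`-block of `S⁻¹` is the Schur complement `T = S₂₂ - S₂₁ S₁₁⁻¹ S₁₂`. Using `Φ₁ = SΓ₁`,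
`Φ₂* = Γ₂*S` and `Γ₁Φ₂* = S⁻¹AS - B`, the product `W₂(z)W₁(z)` becomes `I - Γ₂* Z Γ₁` for an
operator `Z` on `H`, and block arithmetic identifies `Z` with `(A - zI)⁻¹S`.
-/

open ContinuousLinearMap

section CornerInverse

variable {R : Type*} [Ring R]

-- An operator on the range of an idempotent `p` is modelled as an element of the corner ring
-- `p R p`, whose unit is `p`; `y` is the inverse of `x` there.
def IsCornerInverse (p x y : R) : Prop :=
  p * y * p = y ∧ y * x = p ∧ x * y = p

def schurComplement (q s m : R) : R :=
  q * s * q - q * s * m * s * q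

variable {p q x y : R}

theorem IsIdempotentElem.mul_eq_zero_of_add_eq_one (hp : IsIdempotentElem p)
    (hpq : p + q = 1) : p * q = 0 := by
  rw [eq_sub_of_add_eq' hpq]; exact hp.mul_one_sub_self

theorem IsIdempotentElem.of_add_eq_one (hp : IsIdempotentElem p) (hpq : p + q = 1) :
    IsIdempotentElem q := by
  rw [eq_sub_of_add_eq' hpq]; exact hp.one_sub

namespace IsCornerInverse

theorem proj_mul (hp : IsIdempotentElem p) (h : IsCornerInverse p x y) : p * y = y := by
  rw [← h.1, ← mul_assoc, ← mul_assoc, hp.eq]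

theorem mul_proj (hp : IsIdempotentElem p) (h : IsCornerInverse p x y) : y * p = y := by
  rw [← h.1, mul_assoc, hp.eq]

theorem mul_mul_proj {s : R} (hp : IsIdempotentElem p) (h : IsCornerInverse p (p * s * p) y) :
    y * s * p = p := by
  simpa only [← mul_assoc, h.mul_proj hp] using h.2.1

theorem proj_mul_mul {s : R} (hp : IsIdempotentElem p) (h : IsCornerInverse p (p * s * p) y) :
    p * s * y = p := by
  simpa only [mul_assoc, h.proj_mul hp] using h.2.2

end IsCornerInverse

variable {m : R}

theorem schurComplement_eq (hp : IsIdempotentElem p) (hpq : p + q = 1) {s : R}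
    (hm : IsCornerInverse p (p * s * p) m) :
    schurComplement q s m = q * s - q * s * m * s := by
  obtain rfl := eq_sub_of_add_eq' hpq
  calc schurComplement (1 - p) s m
      = (1 - p) * s - (1 - p) * s * m * s - ((1 - p) * s * p - (1 - p) * s * (m * s * p)) := by
        rw [schurComplement]; noncomm_ring
    _ = (1 - p) * s - (1 - p) * s * m * s := by rw [hm.mul_mul_proj hp, sub_self, sub_zero]

theorem IsCornerInverse.schurComplement (hp : IsIdempotentElem p) (hpq : p + q = 1) (s : Rˣ)
    (hm : IsCornerInverse p (p * s * p) m) :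
    IsCornerInverse q (q * ↑s⁻¹ * q) (schurComplement q s m) := by
  have hq := hp.of_add_eq_one hpq
  have hq' : q = 1 - p := eq_sub_of_add_eq' hpq
  refine ⟨?_, ?_, ?_⟩
  · have hl : q * _root_.schurComplement q s m = _root_.schurComplement q s m := by
      simp only [_root_.schurComplement, mul_sub, ← mul_assoc, hq.eq]
    have hr : _root_.schurComplement q s m * q = _root_.schurComplement q s m := by
      simp only [_root_.schurComplement, sub_mul, mul_assoc, hq.eq]
    rw [hl, hr]
  · have hmq : m * q = 0 := by
      rw [← hm.mul_proj hp, mul_assoc, hp.mul_eq_zero_of_add_eq_one hpq, mul_zero]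
    have hts : (q * s - q * s * m * s) * ↑s⁻¹ = q - q * s * m := by
      simp only [sub_mul, mul_assoc, Units.mul_inv, mul_one]
    rw [schurComplement_eq hp hpq hm]
    calc (q * s - q * s * m * s) * (q * ↑s⁻¹ * q)
        = (q * s - q * s * m * s) * ↑s⁻¹ * q
            - (q * s * p - q * s * (m * s * p)) * ↑s⁻¹ * q := by
          rw [hq']; noncomm_ring
      _ = q := by
          rw [hts, hm.mul_mul_proj hp, sub_self, zero_mul, zero_mul, sub_zero, sub_mul,
            mul_assoc _ m, hmq, mul_zero, hq.eq, sub_zero]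
  · have hqm : q * m = 0 := by
      rw [← hm.proj_mul hp, ← mul_assoc, hq', hp.one_sub_mul_self, zero_mul]
    have hs : q * ↑s⁻¹ * q * s = q - q * ↑s⁻¹ * p * s := by
      rw [hq', mul_sub (_ * _), mul_one, sub_mul, mul_assoc _ _ (s : R), Units.inv_mul, mul_one]
    rw [schurComplement_eq hp hpq hm]
    calc q * ↑s⁻¹ * q * (q * s - q * s * m * s)
        = q * ↑s⁻¹ * q * q * (s * (1 - m * s)) := by noncomm_ring
      _ = q * ↑s⁻¹ * q * s * (1 - m * s) := by rw [mul_assoc _ q q, hq.eq, ← mul_assoc]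
      _ = q - q * m * s - q * ↑s⁻¹ * p * s + q * ↑s⁻¹ * (p * s * m) * s := by
          rw [hs]; noncomm_ring
      _ = q := by rw [hqm, hm.proj_mul_mul hp]; noncomm_ring

variable {u n₁ n₂ : R}

theorem lowerTriangular_inv_mul (hp : IsIdempotentElem p) (hpq : p + q = 1)
    (hu : u * q = q * u * q) (h₁ : IsCornerInverse p (p * u * p) n₁)
    (h₂ : IsCornerInverse q (q * u * q) n₂) : (n₁ + n₂ - n₂ * u * n₁) * u = 1 := by
  have hq := hp.of_add_eq_one hpq
  have hn₁u : n₁ * u = p := by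
    have hn₁q : n₁ * q = 0 := by
      rw [← h₁.mul_proj hp, mul_assoc, hp.mul_eq_zero_of_add_eq_one hpq, mul_zero]
    calc n₁ * u = n₁ * u * p + n₁ * (u * q) := by rw [← mul_assoc, ← mul_add, hpq, mul_one]
      _ = p := by
          rw [h₁.mul_mul_proj hp, hu, ← mul_assoc, ← mul_assoc, hn₁q, zero_mul, zero_mul,
            add_zero]
  have hn₂u : n₂ * u - n₂ * u * p = q := by
    rw [sub_eq_iff_eq_add', ← h₂.mul_mul_proj hq, ← mul_add, hpq, mul_one]
  calc (n₁ + n₂ - n₂ * u * n₁) * u = n₁ * u + (n₂ * u - n₂ * u * (n₁ * u)) := by noncomm_ring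
    _ = 1 := by rw [hn₁u, hn₂u, hpq]

theorem lowerTriangular_inv_mul_units_eq (hp : IsIdempotentElem p) (hpq : p + q = 1) (s : Rˣ)
    {v : R} (hm : IsCornerInverse p (p * s * p) m) (hu : u * q = q * u * q)
    (hv : v * p = p * v * p) (h₁ : IsCornerInverse p (p * u * p) n₁)
    (h₂ : IsCornerInverse q (q * u * q) n₂) :
    (n₁ + n₂ - n₂ * u * n₁) * s =
      n₂ * schurComplement q s m + s * (m * n₁) * s -
        n₂ * schurComplement q s m * (↑s⁻¹ * u * s - v) * (m * n₁) * s := by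
  have hq := hp.of_add_eq_one hpq
  have hsm : s * m = p + q * s * m := by
    rw [← hm.proj_mul_mul hp, mul_assoc p, mul_assoc q, ← add_mul, hpq, one_mul]
  rw [schurComplement_eq hp hpq hm]
  set t := q * s - q * s * m * s with ht
  have hn₂t : n₂ * t = n₂ * s - n₂ * s * m * s := by
    calc n₂ * t = n₂ * q * s - n₂ * q * s * m * s := by rw [ht]; noncomm_ring
      _ = n₂ * s - n₂ * s * m * s := by rw [h₂.mul_proj hq]
  have hn₂ts : n₂ * t * ↑s⁻¹ = n₂ - n₂ * s * m := by
    rw [hn₂t, sub_mul, mul_assoc _ (s : R), Units.mul_inv, mul_one, mul_assoc _ (s : R),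
      Units.mul_inv, mul_one]
  have htvm : t * v * m = 0 := by
    have hvm : v * m = p * v * m := by
      calc v * m = v * p * m := by rw [mul_assoc, hm.proj_mul hp]
        _ = p * v * m := by rw [hv, mul_assoc (p * v), hm.proj_mul hp]
    calc t * v * m = (q * s * p - q * s * (m * s * p)) * v * m := by
          rw [mul_assoc t, hvm, ht]; noncomm_ring
      _ = 0 := by rw [hm.mul_mul_proj hp, sub_self, zero_mul, zero_mul]
  have hn₂usm : n₂ * u * (s * m) * n₁ = n₂ * u * n₁ + q * s * m * n₁ := by
    calc n₂ * u * (s * m) * n₁ = n₂ * u * (p + q * s * m) * n₁ := by rw [hsm]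
      _ = n₂ * u * (p * n₁) + n₂ * u * q * (s * m * n₁) := by noncomm_ring
      _ = n₂ * u * n₁ + q * s * m * n₁ := by
          rw [h₁.proj_mul hp, h₂.mul_mul_proj hq]; noncomm_ring
  have hmusm : m * u * (s * m) * n₁ = m := by
    have hmuq : m * u * q = 0 := by
      calc m * u * q = m * p * (q * u * q) := by rw [← hu, hm.mul_proj hp, mul_assoc]
        _ = m * (p * q) * u * q := by noncomm_ring
        _ = 0 := by rw [hp.mul_eq_zero_of_add_eq_one hpq, mul_zero, zero_mul, zero_mul]
    have hmun₁ : m * u * p * n₁ = m := by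
      calc m * u * p * n₁ = m * p * u * p * n₁ := by rw [hm.mul_proj hp]
        _ = m * (p * u * p * n₁) := by noncomm_ring
        _ = m := by rw [h₁.2.2, hm.mul_proj hp]
    calc m * u * (s * m) * n₁ = m * u * (p + q * s * m) * n₁ := by rw [hsm]
      _ = m * u * p * n₁ + m * u * q * (s * m * n₁) := by noncomm_ring
      _ = m := by rw [hmun₁, hmuq, zero_mul, add_zero]
  symm
  calc n₂ * t + s * (m * n₁) * s - n₂ * t * (↑s⁻¹ * u * s - v) * (m * n₁) * s
      = n₂ * t + s * m * n₁ * s - n₂ * t * ↑s⁻¹ * u * (s * m) * n₁ * s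
          + n₂ * (t * v * m) * n₁ * s := by noncomm_ring
    _ = n₂ * s - n₂ * s * m * s + s * m * n₁ * s - (n₂ - n₂ * s * m) * u * (s * m) * n₁ * s := by
        rw [hn₂ts, htvm, hn₂t, mul_zero, zero_mul, zero_mul, add_zero]
    _ = n₂ * s - n₂ * s * m * s + s * m * n₁ * s - n₂ * u * (s * m) * n₁ * s
          + n₂ * s * (m * u * (s * m) * n₁) * s := by noncomm_ring
    _ = n₂ * s + (1 - q) * s * m * n₁ * s - n₂ * u * n₁ * s := by
        rw [hn₂usm, hmusm]; noncomm_ring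
    _ = (n₁ + n₂ - n₂ * u * n₁) * s := by
        rw [← eq_sub_of_add_eq hpq, hm.proj_mul_mul hp, h₁.proj_mul hp]; noncomm_ring

end CornerInverse

section Algebra

variable {𝕜 R : Type*} [CommRing 𝕜] [Ring R] [Algebra 𝕜 R] {p a : R}

theorem IsIdempotentElem.mul_sub_smul_one_mul (hp : IsIdempotentElem p) (z : 𝕜) :
    p * (a - z • 1) * p = p * (a * p) - z • p := by
  rw [mul_sub, sub_mul, mul_smul_comm, smul_mul_assoc, mul_one, hp.eq, mul_assoc]

theorem IsIdempotentElem.sub_smul_one_mul (hp : IsIdempotentElem p) (h : a * p = p * a * p)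
    (z : 𝕜) : (a - z • 1) * p = p * (a - z • 1) * p := by
  simp only [sub_mul, h, mul_sub, mul_smul_comm, smul_mul_assoc, mul_one, one_mul, hp.eq]

theorem Units.inv_mul_sub_smul_one_mul (s : Rˣ) (a b : R) (z : 𝕜) :
    ↑s⁻¹ * (a - z • 1) * s - (b - z • 1) = ↑s⁻¹ * a * s - b := by
  rw [mul_sub, sub_mul, mul_smul_comm, smul_mul_assoc, mul_one, Units.inv_mul]; abel

end Algebra

section TransferFunction

variable {𝕜 G H : Type*} [NormedField 𝕜] [NormedAddCommGroup G] [NormedSpace 𝕜 G]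
  [NormedAddCommGroup H] [NormedSpace 𝕜 H]

theorem isCornerInverse_iff_comp {p x y : H →L[𝕜] H} :
    IsCornerInverse p x y ↔ p ∘L y ∘L p = y ∧ y ∘L x = p ∧ x ∘L y = p := by
  rw [IsCornerInverse, mul_assoc]; rfl

theorem one_sub_comp_eq_comp_of_node {A B S Sinv X Y Z : H →L[𝕜] H} {Φ₁ Γ₁ : G →L[𝕜] H}
    {Φ₂ Γ₂ : H →L[𝕜] G} (hS : Sinv * S = 1) (hid : A * S - S * B = Φ₁ ∘L Φ₂)
    (hid1 : S ∘L Γ₁ = Φ₁) (hid2 : Γ₂ ∘L S = Φ₂)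
    (hZ : Z * S = Y + S * X * S - Y * (Sinv * A * S - B) * X * S) :
    1 - Γ₂ ∘L Z ∘L Φ₁ = (1 - Γ₂ ∘L Y ∘L Γ₁) ∘L (1 - Φ₂ ∘L X ∘L Φ₁) := by
  subst hid1 hid2
  have hK : Sinv * A * S - B = Γ₁ ∘L Γ₂ * S := by
    calc Sinv * A * S - B = Sinv * (A * S - S * B) := by
          rw [mul_sub, ← mul_assoc, ← mul_assoc, hS, one_mul, mul_assoc]
      _ = Γ₁ ∘L Γ₂ * S := by
          rw [hid, mul_def, mul_def, ← comp_assoc, ← comp_assoc, ← comp_assoc,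
            show Sinv ∘L S = 1 from hS, one_def, id_comp]
  calc 1 - Γ₂ ∘L Z ∘L S ∘L Γ₁ = 1 - Γ₂ ∘L (Z * S) ∘L Γ₁ := rfl
    _ = 1 - Γ₂ ∘L (S * X * S + Y - Y * (Γ₁ ∘L Γ₂) * (S * X * S)) ∘L Γ₁ := by
        rw [hZ, hK]; noncomm_ring
    _ = (1 - Γ₂ ∘L Y ∘L Γ₁) ∘L (1 - (Γ₂ ∘L S) ∘L X ∘L S ∘L Γ₁) := by
        simp only [comp_sub, sub_comp, comp_add, add_comp, mul_def, comp_assoc, one_def, comp_id,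
          id_comp]
        abel

end TransferFunction

theorem stmt_1_general
    {G H : Type*} [NormedAddCommGroup G] [InnerProductSpace ℂ G] [CompleteSpace G]
    [NormedAddCommGroup H] [InnerProductSpace ℂ H] [CompleteSpace H]
    (A B S Sinv : H →L[ℂ] H)
    (Φ₁ Φ₂ Γ₁ Γ₂ : G →L[ℂ] H)
    (hS₁ : S ∘L Sinv = 1) (hS₂ : Sinv ∘L S = 1)
    (hid : A ∘L S - S ∘L B = Φ₁ ∘L adjoint Φ₂)
    (hid1 : S ∘L Γ₁ = Φ₁)
    (hid2 : adjoint Γ₂ ∘L S = adjoint Φ₂)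
    (P₁ P₂ : H →L[ℂ] H)
    (hP₁idem : P₁ ∘L P₁ = P₁)
    (hsum : P₁ + P₂ = 1)
    (htriA : A ∘L P₂ = P₂ ∘L A ∘L P₂)
    (htriB : B ∘L P₁ = P₁ ∘L B ∘L P₁)
    (S11inv : H →L[ℂ] H)
    (hsupp : P₁ ∘L S11inv ∘L P₁ = S11inv)
    (hleft : S11inv ∘L (P₁ ∘L S ∘L P₁) = P₁)
    (hright : (P₁ ∘L S ∘L P₁) ∘L S11inv = P₁) :
    ∃ T22inv : H →L[ℂ] H,
      (P₂ ∘L T22inv ∘L P₂ = T22inv ∧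
       T22inv ∘L (P₂ ∘L Sinv ∘L P₂) = P₂ ∧
       (P₂ ∘L Sinv ∘L P₂) ∘L T22inv = P₂) ∧
      ∀ (z : ℂ) (Ainv N₁ N₂ : H →L[ℂ] H),
        Ainv ∘L (A - z • 1) = 1 → (A - z • 1) ∘L Ainv = 1 →
        P₁ ∘L N₁ ∘L P₁ = N₁ →
        N₁ ∘L (P₁ ∘L A ∘L P₁ - z • P₁) = P₁ →
        (P₁ ∘L A ∘L P₁ - z • P₁) ∘L N₁ = P₁ →
        P₂ ∘L N₂ ∘L P₂ = N₂ →
        N₂ ∘L (P₂ ∘L A ∘L P₂ - z • P₂) = P₂ →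
        (P₂ ∘L A ∘L P₂ - z • P₂) ∘L N₂ = P₂ →
        (1 : G →L[ℂ] G) - adjoint Γ₂ ∘L Ainv ∘L Φ₁ =
          ((1 : G →L[ℂ] G) - adjoint Γ₂ ∘L P₂ ∘L N₂ ∘L T22inv ∘L P₂ ∘L Γ₁) ∘L
          ((1 : G →L[ℂ] G) - adjoint Φ₂ ∘L P₁ ∘L S11inv ∘L N₁ ∘L P₁ ∘L Φ₁) := by
  have hp : IsIdempotentElem P₁ := hP₁idem
  have hq := hp.of_add_eq_one hsum
  let s : (H →L[ℂ] H)ˣ := ⟨S, Sinv, hS₁, hS₂⟩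
  have hm : IsCornerInverse P₁ (P₁ * s * P₁) S11inv := by
    rw [isCornerInverse_iff_comp, mul_assoc]; exact ⟨hsupp, hleft, hright⟩
  have hT := hm.schurComplement hp hsum s
  refine ⟨schurComplement P₂ s S11inv, by rwa [isCornerInverse_iff_comp, mul_assoc] at hT, ?_⟩
  intro z Ainv N₁ N₂ _ hAinv hN₁ hN₁l hN₁r hN₂ hN₂l hN₂r
  have hu := hq.sub_smul_one_mul (show A * P₂ = P₂ * A * P₂ by rw [mul_assoc]; exact htriA) z
  have hv := hp.sub_smul_one_mul (show B * P₁ = P₁ * B * P₁ by rw [mul_assoc]; exact htriB) z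
  have h₁ : IsCornerInverse P₁ (P₁ * (A - z • 1) * P₁) N₁ := by
    rw [isCornerInverse_iff_comp, hp.mul_sub_smul_one_mul]; exact ⟨hN₁, hN₁l, hN₁r⟩
  have h₂ : IsCornerInverse P₂ (P₂ * (A - z • 1) * P₂) N₂ := by
    rw [isCornerInverse_iff_comp, hq.mul_sub_smul_one_mul]; exact ⟨hN₂, hN₂l, hN₂r⟩
  obtain rfl := left_inv_eq_right_inv (lowerTriangular_inv_mul hp hsum hu h₁ h₂) hAinv
  have hX : P₁ ∘L S11inv ∘L N₁ ∘L P₁ ∘L Φ₁ = (S11inv * N₁) ∘L Φ₁ :=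
    calc _ = (P₁ * S11inv * (N₁ * P₁)) ∘L Φ₁ := rfl
      _ = _ := by rw [hm.proj_mul hp, h₁.mul_proj hp]
  have hY : P₂ ∘L N₂ ∘L schurComplement P₂ s S11inv ∘L P₂ ∘L Γ₁ =
      (N₂ * schurComplement P₂ s S11inv) ∘L Γ₁ :=
    calc _ = (P₂ * N₂ * (schurComplement P₂ s S11inv * P₂)) ∘L Γ₁ := rfl
      _ = _ := by rw [h₂.proj_mul hq, hT.mul_proj hq]
  rw [hX, hY]
  refine one_sub_comp_eq_comp_of_node hS₂ hid hid1 hid2 ?_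
  have hZ := lowerTriangular_inv_mul_units_eq hp hsum s hm hu hv h₁ h₂
  rwa [Units.inv_mul_sub_smul_one_mul] at hZ

/-- Theorem 3.1: the fundamental factorization theorem for operator-valued
transfer functions `W_A(z) = I - Γ₂*(A - zI)⁻¹Φ₁` of an operator node
satisfying the operator identity `AS - SB = Φ₁Φ₂*`, `SΓ₁ = Φ₁`, `Γ₂*S = Φ₂*`,
with minimality conditions, an orthogonal decomposition `H = L₁ ⊕ L₂`
(orthogonal projections `P₁, P₂`), triangularity `AP₂ = P₂AP₂`, `BP₁ = P₁BP₁`,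
and invertibility of `S` and of `S₁₁ = P₁SP₁` on `L₁`.  Inverses of operators
supported on `Lⱼ` are taken relative to the unit `Pⱼ` of `Lⱼ`. -/
theorem stmt_1
    {G H : Type*} [NormedAddCommGroup G] [InnerProductSpace ℂ G] [CompleteSpace G]
    [NormedAddCommGroup H] [InnerProductSpace ℂ H] [CompleteSpace H]
    (A B S Sinv : H →L[ℂ] H)
    (Φ₁ Φ₂ Γ₁ Γ₂ : G →L[ℂ] H)
    (hS₁ : S ∘L Sinv = 1) (hS₂ : Sinv ∘L S = 1)
    (hid : A ∘L S - S ∘L B = Φ₁ ∘L adjoint Φ₂)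
    (hid1 : S ∘L Γ₁ = Φ₁)
    (hid2 : adjoint Γ₂ ∘L S = adjoint Φ₂)
    (hmin1 : (⨆ n : ℕ, LinearMap.range (((A ^ n) ∘L Φ₁) : G →ₗ[ℂ] H)).topologicalClosure = ⊤)
    (hmin2 : (⨆ n : ℕ, LinearMap.range ((((adjoint A) ^ n) ∘L Γ₂) : G →ₗ[ℂ] H)).topologicalClosure = ⊤)
    (hmin3 : (⨆ n : ℕ, LinearMap.range (((B ^ n) ∘L Γ₁) : G →ₗ[ℂ] H)).topologicalClosure = ⊤)
    (hmin4 : (⨆ n : ℕ, LinearMap.range ((((adjoint B) ^ n) ∘L Φ₂) : G →ₗ[ℂ] H)).topologicalClosure = ⊤)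
    (P₁ P₂ : H →L[ℂ] H)
    (hP₁sa : IsSelfAdjoint P₁) (hP₁idem : P₁ ∘L P₁ = P₁)
    (hP₂sa : IsSelfAdjoint P₂) (hP₂idem : P₂ ∘L P₂ = P₂)
    (hsum : P₁ + P₂ = 1)
    (htriA : A ∘L P₂ = P₂ ∘L A ∘L P₂)
    (htriB : B ∘L P₁ = P₁ ∘L B ∘L P₁)
    (S11inv : H →L[ℂ] H)
    (hsupp : P₁ ∘L S11inv ∘L P₁ = S11inv)
    (hleft : S11inv ∘L (P₁ ∘L S ∘L P₁) = P₁)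
    (hright : (P₁ ∘L S ∘L P₁) ∘L S11inv = P₁) :
    ∃ T22inv : H →L[ℂ] H,
      (P₂ ∘L T22inv ∘L P₂ = T22inv ∧
       T22inv ∘L (P₂ ∘L Sinv ∘L P₂) = P₂ ∧
       (P₂ ∘L Sinv ∘L P₂) ∘L T22inv = P₂) ∧
      ∀ (z : ℂ) (Ainv N₁ N₂ : H →L[ℂ] H),
        Ainv ∘L (A - z • 1) = 1 → (A - z • 1) ∘L Ainv = 1 →
        P₁ ∘L N₁ ∘L P₁ = N₁ →
        N₁ ∘L (P₁ ∘L A ∘L P₁ - z • P₁) = P₁ →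
        (P₁ ∘L A ∘L P₁ - z • P₁) ∘L N₁ = P₁ →
        P₂ ∘L N₂ ∘L P₂ = N₂ →
        N₂ ∘L (P₂ ∘L A ∘L P₂ - z • P₂) = P₂ →
        (P₂ ∘L A ∘L P₂ - z • P₂) ∘L N₂ = P₂ →
        (1 : G →L[ℂ] G) - adjoint Γ₂ ∘L Ainv ∘L Φ₁ =
          ((1 : G →L[ℂ] G) - adjoint Γ₂ ∘L P₂ ∘L N₂ ∘L T22inv ∘L P₂ ∘L Γ₁) ∘L
          ((1 : G →L[ℂ] G) - adjoint Φ₂ ∘L P₁ ∘L S11inv ∘L N₁ ∘L P₁ ∘L Φ₁) :=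
  stmt_1_general A B S Sinv Φ₁ Φ₂ Γ₁ Γ₂ hS₁ hS₂ hid hid1 hid2 P₁ P₂ hP₁idem hsum htriA htriB S11inv
    hsupp hleft hright
end

section
/- Let Ω ⊆ ℂ be a nonempty connected open set, N a positive integer, and U : Ω → M_N(ℂ) an analytic matrix-valued function such that U(z)*U(z) = I for every z ∈ Ω. Then U is constant on Ω. -/
open Matrix

/-- An analytic matrix-valued function on a nonempty connected open set
`Ω ⊆ ℂ` whose values are unitary matrices (`U(z)*U(z) = I`) is constant.
(Key step in the uniqueness proof for the Wiener–Masani problem.) -/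
theorem stmt_4 {N : ℕ} (hN : 0 < N) (Ω : Set ℂ) (hΩ : IsConnected Ω) (hΩo : IsOpen Ω)
    (U : ℂ → Matrix (Fin N) (Fin N) ℂ)
    (hU : ∀ i j, DifferentiableOn ℂ (fun z => U z i j) Ω)
    (hunit : ∀ z ∈ Ω, (U z)ᴴ * U z = 1) :
    ∃ C : Matrix (Fin N) (Fin N) ℂ, ∀ z ∈ Ω, U z = C := by
  obtain ⟨z₀, hz₀⟩ := hΩ.nonempty
  refine ⟨U z₀, fun z hz => ?_⟩
  ext i j
  -- consider column j as a function into EuclideanSpace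
  set f : ℂ → EuclideanSpace ℂ (Fin N) :=
    fun z => (EuclideanSpace.equiv (Fin N) ℂ).symm (fun i => U z i j) with hf
  have hdf : DifferentiableOn ℂ f Ω := by
    apply (EuclideanSpace.equiv (Fin N) ℂ).symm.toContinuousLinearMap.differentiable.comp_differentiableOn
    exact differentiableOn_pi.2 fun i => hU i j
  have hnorm : ∀ z ∈ Ω, ‖f z‖ = 1 := by
    intro z hz
    have h1 : ((U z)ᴴ * U z) j j = (1 : ℂ) := by
      rw [hunit z hz]; simp [Matrix.one_apply]
    rw [Matrix.mul_apply] at h1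
    simp only [conjTranspose_apply, RCLike.star_def] at h1
    have h2 : (∑ k, (‖U z k j‖ ^ 2 : ℝ) : ℂ) = 1 := by
      rw [← h1]
      push_cast
      refine Finset.sum_congr rfl fun k _ => ?_
      rw [Complex.conj_mul']
    have h3 : ∑ k, (‖U z k j‖ ^ 2 : ℝ) = 1 := by exact_mod_cast h2
    have : ‖f z‖ = Real.sqrt (∑ k, ‖U z k j‖ ^ 2) := by
      rw [EuclideanSpace.norm_eq]
      rfl
    rw [this, h3, Real.sqrt_one]
  have hmax : IsMaxOn (norm ∘ f) Ω z₀ := by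
    intro x hx
    simp only [Function.comp, Set.mem_setOf_eq, hnorm x hx, hnorm z₀ hz₀, le_refl]
  have := Complex.eqOn_of_isPreconnected_of_isMaxOn_norm hΩ.isPreconnected hΩo hdf hz₀ hmax hz
  have : f z = f z₀ := this
  have := congrFun (congrArg (EuclideanSpace.equiv (Fin N) ℂ) this) i
  simpa [hf] using this
end

section
/- Let N be a positive integer and let V, W : ℂ₊ → M_N(ℂ) be analytic matrix-valued functions on the open upper half-plane ℂ₊ such that W(z) is invertible for every z ∈ ℂ₊ and V(z)*V(z) = W(z)*W(z) for all z ∈ ℂ₊. If there is a sequence (zₙ) in ℂ₊ with |zₙ| → ∞ such that V(zₙ) → I and W(zₙ) → I, then V(z) = W(z) for all z ∈ ℂ₊. -/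
open Matrix Filter

/-! The quotient `U = V W⁻¹` is holomorphic on the upper half-plane and unitary there,
since `Uᴴ U = W⁻ᴴ (Vᴴ V) W⁻¹ = 1`. Hence its Frobenius norm is constantly `√N`; as that
norm is Euclidean, hence strictly convex, the maximum modulus principle makes `U` a
constant `C`. Then `V = C W`, and evaluating along `zₙ` gives `C = C · 1 = 1`. -/

section Differentiability

variable {𝕜 n : Type*} [NontriviallyNormedField 𝕜] [Fintype n] {s : Set 𝕜}

theorem Matrix.differentiableOn_det [DecidableEq n] {M : 𝕜 → Matrix n n 𝕜}
    (hM : ∀ i j, DifferentiableOn 𝕜 (fun z => M z i j) s) :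
    DifferentiableOn 𝕜 (fun z => (M z).det) s := by
  simp only [det_apply']
  exact .fun_sum fun σ _ => (DifferentiableOn.fun_finsetProd fun i _ => hM (σ i) i).const_mul _

theorem Matrix.differentiableOn_adjugate_apply [DecidableEq n] {M : 𝕜 → Matrix n n 𝕜}
    (hM : ∀ i j, DifferentiableOn 𝕜 (fun z => M z i j) s) (i j : n) :
    DifferentiableOn 𝕜 (fun z => (M z).adjugate i j) s := by
  simp only [adjugate_apply]
  refine differentiableOn_det fun k l => ?_
  simp only [updateRow_apply]
  split_ifs
  exacts [differentiableOn_const _, hM k l]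

theorem Matrix.differentiableOn_inv_apply [DecidableEq n] {M : 𝕜 → Matrix n n 𝕜}
    (hM : ∀ i j, DifferentiableOn 𝕜 (fun z => M z i j) s) (hdet : ∀ z ∈ s, IsUnit (M z).det)
    (i j : n) : DifferentiableOn 𝕜 (fun z => (M z)⁻¹ i j) s := by
  simp only [inv_def, smul_apply, smul_eq_mul, Ring.inverse_eq_inv']
  exact ((differentiableOn_det hM).inv fun z hz => (hdet z hz).ne_zero).mul
    (differentiableOn_adjugate_apply hM i j)

theorem Matrix.differentiableOn_mul_apply {A B : 𝕜 → Matrix n n 𝕜}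
    (hA : ∀ i j, DifferentiableOn 𝕜 (fun z => A z i j) s)
    (hB : ∀ i j, DifferentiableOn 𝕜 (fun z => B z i j) s) (i j : n) :
    DifferentiableOn 𝕜 (fun z => (A z * B z) i j) s := by
  simp only [mul_apply]
  exact .fun_sum fun k _ => (hA i k).mul (hB k j)

end Differentiability

theorem Matrix.conjTranspose_mul_self_mul_nonsing_inv_eq_one {n α : Type*} [Fintype n] [DecidableEq n]
    [CommRing α] [StarRing α] {V W : Matrix n n α} (hW : IsUnit W.det)
    (h : Vᴴ * V = Wᴴ * W) : (V * W⁻¹)ᴴ * (V * W⁻¹) = 1 := by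
  have hWH : IsUnit Wᴴ.det := by rw [det_conjTranspose]; exact hW.star
  calc (V * W⁻¹)ᴴ * (V * W⁻¹) = Wᴴ⁻¹ * (Vᴴ * V) * W⁻¹ := by
        simp only [conjTranspose_mul, conjTranspose_nonsing_inv, Matrix.mul_assoc]
    _ = 1 := by
        rw [h, ← Matrix.mul_assoc, mul_nonsing_inv_cancel_right _ _ hW, nonsing_inv_mul _ hWH]

theorem Matrix.norm_toLp_vec_sq_of_conjTranspose_mul_self_eq_one {𝕜 n : Type*} [RCLike 𝕜]
    [Fintype n] [DecidableEq n] {U : Matrix n n 𝕜} (hU : Uᴴ * U = 1) :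
    ‖WithLp.toLp 2 U.vec‖ ^ 2 = Fintype.card n := by
  rw [@norm_sq_eq_re_inner 𝕜, EuclideanSpace.inner_eq_star_dotProduct, dotProduct_comm]
  simp [star_vec_dotProduct_vec, hU]

theorem Complex.eqOn_of_isPreconnected_of_norm_eq_const {E F : Type*} [NormedAddCommGroup E]
    [NormedSpace ℂ E] [NormedAddCommGroup F] [NormedSpace ℂ F] [StrictConvexSpace ℝ F]
    {f : E → F} {U : Set E} {c : E} {r : ℝ} (hc : IsPreconnected U) (ho : IsOpen U)
    (hd : DifferentiableOn ℂ f U) (hcU : c ∈ U) (hr : ∀ z ∈ U, ‖f z‖ = r) :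
    Set.EqOn f (Function.const E (f c)) U :=
  eqOn_of_isPreconnected_of_isMaxOn_norm hc ho hd hcU fun z hz => by
    simp [hr z hz, hr c hcU]

theorem Matrix.eqOn_of_isPreconnected_of_conjTranspose_mul_self_eq_one {E n : Type*}
    [NormedAddCommGroup E] [NormedSpace ℂ E] [Fintype n] [DecidableEq n]
    {U : E → Matrix n n ℂ} {s : Set E} {c : E} (hc : IsPreconnected s) (ho : IsOpen s)
    (hd : ∀ i j, DifferentiableOn ℂ (fun z => U z i j) s) (hU : ∀ z ∈ s, (U z)ᴴ * U z = 1)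
    (hcs : c ∈ s) : Set.EqOn U (Function.const E (U c)) s := by
  have hvec := Complex.eqOn_of_isPreconnected_of_norm_eq_const
    (f := fun z => WithLp.toLp 2 (U z).vec) (r := √(Fintype.card n)) hc ho
    (differentiableOn_euclidean.2 fun p => hd p.2 p.1) hcs fun z hz => by
      rw [← norm_toLp_vec_sq_of_conjTranspose_mul_self_eq_one (hU z hz),
        Real.sqrt_sq (norm_nonneg _)]
  exact fun z hz => vec_inj.1 (congrArg WithLp.ofLp (hvec hz))

theorem stmt_5_general {N : ℕ}
    (V W : ℂ → Matrix (Fin N) (Fin N) ℂ)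
    (hV : ∀ i j, DifferentiableOn ℂ (fun z => V z i j) {z : ℂ | 0 < z.im})
    (hW : ∀ i j, DifferentiableOn ℂ (fun z => W z i j) {z : ℂ | 0 < z.im})
    (hWinv : ∀ z : ℂ, 0 < z.im → IsUnit (W z))
    (hmod : ∀ z : ℂ, 0 < z.im → (V z)ᴴ * V z = (W z)ᴴ * W z)
    (zs : ℕ → ℂ) (hzs : ∀ n, 0 < (zs n).im)
    (hVlim : Tendsto (fun n => V (zs n)) atTop (nhds 1))
    (hWlim : Tendsto (fun n => W (zs n)) atTop (nhds 1)) :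
    ∀ z : ℂ, 0 < z.im → V z = W z := by
  have hdet : ∀ z : ℂ, 0 < z.im → IsUnit (W z).det := fun z hz =>
    (isUnit_iff_isUnit_det _).1 (hWinv z hz)
  set C := V (zs 0) * (W (zs 0))⁻¹
  have hVW : ∀ z : ℂ, 0 < z.im → V z = C * W z := by
    have hconst := eqOn_of_isPreconnected_of_conjTranspose_mul_self_eq_one
      (U := fun z => V z * (W z)⁻¹) (convex_halfSpace_im_gt 0).isPreconnected
      (isOpen_lt continuous_const Complex.continuous_im)
      (differentiableOn_mul_apply hV (differentiableOn_inv_apply hW hdet))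
      (fun z hz => conjTranspose_mul_self_mul_nonsing_inv_eq_one (hdet z hz) (hmod z hz)) (hzs 0)
    intro z hz
    rw [← nonsing_inv_mul_cancel_right (W z) (V z) (hdet z hz)]
    exact congrArg (· * W z) (hconst hz)
  have hC : C = 1 := by
    have hCW : Tendsto (fun n => V (zs n)) atTop (nhds (C * 1)) :=
      (hWlim.const_mul C).congr fun n => (hVW _ (hzs n)).symm
    simpa using tendsto_nhds_unique hCW hVlim
  intro z hz
  rw [hVW z hz, hC, one_mul]

/-- Corollary 5.2 (uniqueness for the Wiener–Masani prediction problem): two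
analytic matrix functions on the upper half-plane with the same pointwise
modulus `V*V = W*W`, with `W` pointwise invertible, both tending to `I` along
a sequence going to infinity, coincide. -/
theorem stmt_5 {N : ℕ} (hN : 0 < N)
    (V W : ℂ → Matrix (Fin N) (Fin N) ℂ)
    (hV : ∀ i j, DifferentiableOn ℂ (fun z => V z i j) {z : ℂ | 0 < z.im})
    (hW : ∀ i j, DifferentiableOn ℂ (fun z => W z i j) {z : ℂ | 0 < z.im})
    (hWinv : ∀ z : ℂ, 0 < z.im → IsUnit (W z))
    (hmod : ∀ z : ℂ, 0 < z.im → (V z)ᴴ * V z = (W z)ᴴ * W z)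
    (zs : ℕ → ℂ) (hzs : ∀ n, 0 < (zs n).im)
    (hzinf : Tendsto (fun n => ‖zs n‖) atTop atTop)
    (hVlim : Tendsto (fun n => V (zs n)) atTop (nhds 1))
    (hWlim : Tendsto (fun n => W (zs n)) atTop (nhds 1)) :
    ∀ z : ℂ, 0 < z.im → V z = W z :=
  stmt_5_general V W hV hW hWinv hmod zs hzs hVlim hWlim
end

section
/- Let J = diag(−1, 1) and let R ∈ M₂(ℂ) satisfy JR = R*J, RJR* ≥ J (i.e., RJR* − J is positive semidefinite), and (R − I)² = 0. Then there exists ψ ∈ ℂ such that R = [[1 − |ψ|, ψ], [−conj(ψ), 1 + |ψ|]]. -/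
open Matrix
open scoped ComplexOrder

/-!
Write `R = [[a, b], [c, d]]`. Since `R - 1` squares to zero, its trace and determinant vanish:
`a + d = 2` and `(a - 1)(d - 1) = bc`. The `J`-symmetry `JR = R*J` makes `a` real and
`c = -conj b`, hence `(a - 1)² = |b|²`, i.e. `a = 1 ± |b|`. The `(0,0)` entry of `RJR* - J` is
`1 - a² + |b|² = 2(1 - a)`, so positivity forces the sign `a = 1 - |b|`, and then `d = 1 + |b|`.
-/

namespace Matrix

variable {K n : Type*} [Field K] [Fintype n] [DecidableEq n]

theorem trace_eq_zero_of_sq_eq_zero {N : Matrix n n K} (h : N ^ 2 = 0) : N.trace = 0 :=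
  (isNilpotent_trace_of_isNilpotent ⟨2, h⟩).eq_zero

theorem det_eq_zero_of_sq_eq_zero [Nonempty n] {N : Matrix n n K} (h : N ^ 2 = 0) :
    N.det = 0 :=
  pow_eq_zero_iff two_ne_zero |>.mp (by rw [← det_pow, h, det_zero])

theorem fin_two_entries_of_sub_one_sq_eq_zero {R : Matrix (Fin 2) (Fin 2) K}
    (h : (R - 1) ^ 2 = 0) :
    R 0 0 + R 1 1 = 2 ∧ (R 0 0 - 1) * (R 1 1 - 1) = R 0 1 * R 1 0 := by
  have htr := trace_eq_zero_of_sq_eq_zero h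
  have hdet := det_eq_zero_of_sq_eq_zero h
  simp only [trace_fin_two, det_fin_two, sub_apply, one_apply_eq, one_apply_ne one_ne_zero,
    one_apply_ne zero_ne_one, sub_zero] at htr hdet
  exact ⟨by linear_combination htr, by linear_combination hdet⟩

end Matrix

theorem entries_of_mul_eq_conjTranspose_mul {R : Matrix (Fin 2) (Fin 2) ℂ}
    (h : !![(-1 : ℂ), 0; 0, 1] * R = Rᴴ * !![(-1 : ℂ), 0; 0, 1]) :
    starRingEnd ℂ (R 0 0) = R 0 0 ∧ R 1 0 = -starRingEnd ℂ (R 0 1) := by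
  constructor
  · simpa [mul_apply, Fin.sum_univ_two] using (congrFun₂ h 0 0).symm
  · simpa [mul_apply, Fin.sum_univ_two] using congrFun₂ h 1 0

theorem normSq_le_one_add_normSq_of_posSemidef {R : Matrix (Fin 2) (Fin 2) ℂ}
    (h : (R * !![(-1 : ℂ), 0; 0, 1] * Rᴴ - !![(-1 : ℂ), 0; 0, 1]).PosSemidef) :
    Complex.normSq (R 0 0) ≤ 1 + Complex.normSq (R 0 1) := by
  have h00 : (0 : ℂ) ≤ -Complex.normSq (R 0 0) + Complex.normSq (R 0 1) + 1 := by
    simpa [mul_apply, Fin.sum_univ_two, Complex.mul_conj] using h.diag_nonneg (i := 0)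
  exact_mod_cast
    (by linear_combination h00 : (Complex.normSq (R 0 0) : ℂ) ≤ 1 + Complex.normSq (R 0 1))

theorem eq_one_sub_of_sq_sub_one_eq_sq {α β : ℝ} (hβ : 0 ≤ β) (hsq : (α - 1) ^ 2 = β ^ 2)
    (hle : α ^ 2 ≤ 1 + β ^ 2) : α = 1 - β := by
  have hα_le : α ≤ 1 := by nlinarith
  nlinarith

/-- The structure formula (6.4) for Z-class J-modules: a 2×2 matrix `R` with
`JR = R*J`, `RJR* ≥ J` and `(R - I)² = 0`, where `J = diag(-1, 1)`, has the
form `[[1 - |ψ|, ψ], [-conj ψ, 1 + |ψ|]]` for some `ψ ∈ ℂ`. -/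
theorem stmt_6 (J R : Matrix (Fin 2) (Fin 2) ℂ)
    (hJ : J = !![(-1 : ℂ), 0; 0, 1])
    (h1 : J * R = Rᴴ * J)
    (h2 : (R * J * Rᴴ - J).PosSemidef)
    (h3 : (R - 1) ^ 2 = 0) :
    ∃ ψ : ℂ, R = !![1 - (‖ψ‖ : ℂ), ψ;
                    -(starRingEnd ℂ) ψ, 1 + (‖ψ‖ : ℂ)] := by
  subst hJ
  obtain ⟨htrace, hdet⟩ := fin_two_entries_of_sub_one_sq_eq_zero h3
  obtain ⟨hreal, h10⟩ := entries_of_mul_eq_conjTranspose_mul h1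
  obtain ⟨α, h00⟩ : ∃ α : ℝ, R 0 0 = α := ⟨_, (Complex.conj_eq_iff_re.mp hreal).symm⟩
  have hsq : (α - 1) ^ 2 = ‖R 0 1‖ ^ 2 := by
    have : ((α - 1) ^ 2 : ℂ) = (‖R 0 1‖ ^ 2 : ℝ) := by
      rw [Complex.sq_norm, ← Complex.mul_conj]
      rw [h10, show R 1 1 = 2 - α by linear_combination htrace - h00, h00] at hdet
      linear_combination -hdet
    exact_mod_cast this
  have hle := normSq_le_one_add_normSq_of_posSemidef h2
  rw [h00, Complex.normSq_ofReal, ← Complex.sq_norm] at hle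
  have hα := eq_one_sub_of_sq_sub_one_eq_sq (norm_nonneg _) hsq (by linarith)
  have h00' : R 0 0 = 1 - ‖R 0 1‖ := by rw [h00, hα]; push_cast; ring
  have h11 : R 1 1 = 1 + ‖R 0 1‖ := by linear_combination htrace - h00'
  refine ⟨R 0 1, ?_⟩
  ext i j
  fin_cases i <;> fin_cases j <;> simp [h00', h10, h11]
end

section
/- Let ζ ∈ ℝ and let A : ℝ → ℝ be measurable with ∫₀^∞ ∫_ζ^∞ A(x + s)² dx ds < ∞. Define k(x, t) = ∫₀^∞ A(x + s) A(t + s) ds for x, t ≥ ζ. Then the integral operator K on L²(ζ, ∞) given by (Kf)(x) = ∫_ζ^∞ k(x, t) f(t) dt is a bounded self-adjoint operator, and for every f ∈ L²(ζ, ∞) one has ⟨Kf, f⟩ = ∫₀^∞ |F(s)|² ds ≥ 0, where F(s) = ∫_ζ^∞ A(x + s) f(x) dx; in particular K is a nonnegative operator. -/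
/-! The operator `T : L²(ζ, ∞) → L²(0, ∞)`, `(T f)(s) = ∫ A(x + s) f(x) dx = F(s)`, has a
square-integrable kernel, so it is bounded by Cauchy–Schwarz. Its adjoint is the integral operator
with the transposed kernel, and by Fubini `K = T† T`: composing the two kernels integrates out `s`
and produces `k(x, t)`. Hence `K` is self-adjoint and `⟨K f, f⟩ = ‖T f‖² = ∫₀^∞ |F(s)|² ds ≥ 0`. -/

open MeasureTheory ENNReal ComplexConjugate Set

namespace MeasureTheory

variable {α β γ 𝕜 : Type*} [RCLike 𝕜] [MeasurableSpace α] [MeasurableSpace β] [MeasurableSpace γ]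
  {μ : Measure α} {ν : Measure β} {ρ : Measure γ}

lemma eLpNorm_two_sq (f : α → 𝕜) : eLpNorm f 2 μ ^ 2 = ∫⁻ x, ‖f x‖ₑ ^ 2 ∂μ := by
  have h := eLpNorm_nnreal_pow_eq_lintegral (f := f) (μ := μ) (p := 2) two_ne_zero
  simp only [NNReal.coe_ofNat, ENNReal.coe_ofNat, ENNReal.rpow_ofNat] at h
  exact h

lemma enorm_integral_mul_le {f g : α → 𝕜} (hf : AEStronglyMeasurable f μ)
    (hg : AEStronglyMeasurable g μ) :
    ‖∫ x, f x * g x ∂μ‖ₑ ≤ eLpNorm f 2 μ * eLpNorm g 2 μ := by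
  have hCS := eLpNorm_smul_le_mul_eLpNorm (p := 2) (q := 2) (r := 1) hg hf
  rw [eLpNorm_one_eq_lintegral_enorm] at hCS
  exact (enorm_integral_le_lintegral_enorm _).trans hCS

lemma L2.inner_self_eq_integral_norm_sq (f : Lp 𝕜 2 μ) :
    inner 𝕜 f f = ((∫ x, ‖f x‖ ^ 2 ∂μ : ℝ) : 𝕜) := by
  rw [L2.inner_def, ← integral_ofReal]
  simp_rw [inner_self_eq_norm_sq_to_K, RCLike.ofReal_pow]

section Kernel

variable [SFinite ν] {b : α × β → 𝕜}

lemma lintegral_eLpNorm_prodMk_left_sq (hb : AEStronglyMeasurable b (μ.prod ν)) :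
    ∫⁻ x, eLpNorm (fun y => b (x, y)) 2 ν ^ 2 ∂μ = eLpNorm b 2 (μ.prod ν) ^ 2 := by
  simp_rw [eLpNorm_two_sq]
  exact (lintegral_prod _ (hb.enorm.pow_const 2)).symm

lemma aemeasurable_eLpNorm_prodMk_left_sq (hb : AEStronglyMeasurable b (μ.prod ν)) :
    AEMeasurable (fun x => eLpNorm (fun y => b (x, y)) 2 ν ^ 2) μ := by
  simp_rw [eLpNorm_two_sq]
  exact (hb.enorm.pow_const 2).lintegral_prod_right'

lemma MemLp.ae_memLp_prodMk_left (hb : MemLp b 2 (μ.prod ν)) :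
    ∀ᵐ x ∂μ, MemLp (fun y => b (x, y)) 2 ν := by
  have hfin : ∫⁻ x, eLpNorm (fun y => b (x, y)) 2 ν ^ 2 ∂μ ≠ ∞ := by
    rw [lintegral_eLpNorm_prodMk_left_sq hb.1]
    exact pow_ne_top hb.2.ne
  filter_upwards [ae_lt_top' (aemeasurable_eLpNorm_prodMk_left_sq hb.1) hfin,
    hb.1.prodMk_left] with x hx hxm
  exact ⟨hxm, by simpa using hx⟩

lemma MemLp.ae_integrable_prodMk_left_mul (hb : MemLp b 2 (μ.prod ν)) {f : β → 𝕜}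
    (hf : MemLp f 2 ν) : ∀ᵐ x ∂μ, Integrable (fun y => b (x, y) * f y) ν := by
  filter_upwards [hb.ae_memLp_prodMk_left] with x hx
  exact hx.integrable_mul hf

lemma eLpNorm_integral_mul_le (hb : AEStronglyMeasurable b (μ.prod ν)) {f : β → 𝕜}
    (hf : AEStronglyMeasurable f ν) :
    eLpNorm (fun x => ∫ y, b (x, y) * f y ∂ν) 2 μ ≤ eLpNorm b 2 (μ.prod ν) * eLpNorm f 2 ν := by
  rw [← ENNReal.pow_le_pow_left_iff two_ne_zero, mul_pow, ← lintegral_eLpNorm_prodMk_left_sq hb,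
    ← lintegral_mul_const'' _ (aemeasurable_eLpNorm_prodMk_left_sq hb), eLpNorm_two_sq]
  refine lintegral_mono_ae ?_
  filter_upwards [hb.prodMk_left] with x hx
  rw [← mul_pow]
  gcongr
  exact enorm_integral_mul_le hx hf

lemma MemLp.memLp_integral_mul (hb : MemLp b 2 (μ.prod ν)) {f : β → 𝕜} (hf : MemLp f 2 ν) :
    MemLp (fun x => ∫ y, b (x, y) * f y ∂ν) 2 μ :=
  ⟨(hb.1.mul hf.1.comp_snd).integral_prod_right',
    (eLpNorm_integral_mul_le hb.1 hf.1).trans_lt (mul_lt_top hb.2 hf.2)⟩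

noncomputable def integralOperator (hb : MemLp b 2 (μ.prod ν)) : Lp 𝕜 2 ν →L[𝕜] Lp 𝕜 2 μ :=
  LinearMap.mkContinuous
    { toFun := fun f => (hb.memLp_integral_mul (Lp.memLp f)).toLp
      map_add' := fun f g => by
        rw [← MemLp.toLp_add (hb.memLp_integral_mul (Lp.memLp f))
          (hb.memLp_integral_mul (Lp.memLp g))]
        refine MemLp.toLp_congr _ _ ?_
        filter_upwards [hb.ae_integrable_prodMk_left_mul (Lp.memLp f),
          hb.ae_integrable_prodMk_left_mul (Lp.memLp g)] with x hf hg
        rw [Pi.add_apply, ← integral_add hf hg]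
        refine integral_congr_ae ?_
        filter_upwards [Lp.coeFn_add f g] with y hy
        rw [hy, Pi.add_apply, mul_add]
      map_smul' := fun c f => by
        rw [RingHom.id_apply, ← MemLp.toLp_const_smul c (hb.memLp_integral_mul (Lp.memLp f))]
        refine MemLp.toLp_congr _ _ (Filter.Eventually.of_forall fun x => ?_)
        rw [Pi.smul_apply, smul_eq_mul, ← integral_const_mul]
        refine integral_congr_ae ?_
        filter_upwards [Lp.coeFn_smul c f] with y hy
        rw [hy, Pi.smul_apply, smul_eq_mul, mul_left_comm] }
    (eLpNorm b 2 (μ.prod ν)).toReal fun f => by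
      rw [LinearMap.coe_mk, AddHom.coe_mk, Lp.norm_toLp, Lp.norm_def, ← toReal_mul]
      exact toReal_mono (mul_ne_top hb.2.ne (Lp.eLpNorm_ne_top f))
        (eLpNorm_integral_mul_le hb.1 (Lp.aestronglyMeasurable f))

lemma coeFn_integralOperator (hb : MemLp b 2 (μ.prod ν)) (f : Lp 𝕜 2 ν) :
    integralOperator hb f =ᵐ[μ] fun x => ∫ y, b (x, y) * f y ∂ν :=
  MemLp.coeFn_toLp (hb.memLp_integral_mul (Lp.memLp f))

end Kernel

lemma MemLp.integrable_mul_kernel_mul [SFinite ρ] {g : β → 𝕜} (hg : MemLp g 2 ν)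
    {b : β × γ → 𝕜} (hb : MemLp b 2 (ν.prod ρ)) {f : γ → 𝕜} (hf : MemLp f 2 ρ) :
    Integrable (fun q : β × γ => g q.1 * (b q * f q.2)) (ν.prod ρ) := by
  have hm : AEStronglyMeasurable (fun q : β × γ => g q.1 * (b q * f q.2)) (ν.prod ρ) :=
    hg.1.comp_fst.mul (hb.1.mul hf.1.comp_snd)
  refine (integrable_prod_iff hm).2 ⟨?_, ?_⟩
  · filter_upwards [hb.ae_integrable_prodMk_left_mul hf] with y hy
    exact hy.const_mul (g y)
  · have hnorm : MemLp (fun y => ∫ z, ‖b (y, z)‖ * ‖f z‖ ∂ρ) 2 ν :=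
      hb.norm.memLp_integral_mul hf.norm
    simp only [norm_mul, integral_const_mul]
    exact hg.norm.integrable_mul hnorm

theorem coeFn_integralOperator_comp [SFinite ν] [SFinite ρ] {b₁ : α × β → 𝕜} {b₂ : β × γ → 𝕜}
    (hb₁ : MemLp b₁ 2 (μ.prod ν)) (hb₂ : MemLp b₂ 2 (ν.prod ρ)) (f : Lp 𝕜 2 ρ) :
    integralOperator hb₁ (integralOperator hb₂ f) =ᵐ[μ]
      fun x => ∫ z, (∫ y, b₁ (x, y) * b₂ (y, z) ∂ν) * f z ∂ρ := by
  filter_upwards [coeFn_integralOperator hb₁ (integralOperator hb₂ f),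
    hb₁.ae_memLp_prodMk_left] with x hx hb₁x
  calc integralOperator hb₁ (integralOperator hb₂ f) x
      = ∫ y, b₁ (x, y) * ∫ z, b₂ (y, z) * f z ∂ρ ∂ν := by
        rw [hx]
        refine integral_congr_ae ?_
        filter_upwards [coeFn_integralOperator hb₂ f] with y hy
        rw [hy]
    _ = ∫ y, ∫ z, b₁ (x, y) * (b₂ (y, z) * f z) ∂ρ ∂ν := by simp_rw [integral_const_mul]
    _ = ∫ z, ∫ y, b₁ (x, y) * (b₂ (y, z) * f z) ∂ν ∂ρ :=
        integral_integral_swap (hb₁x.integrable_mul_kernel_mul hb₂ (Lp.memLp f))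
    _ = ∫ z, (∫ y, b₁ (x, y) * b₂ (y, z) ∂ν) * f z ∂ρ := by
        simp_rw [← integral_mul_const, mul_assoc]

lemma MemLp.mul_prod {f : α → 𝕜} {g : β → 𝕜} (hf : MemLp f 2 μ) (hg : MemLp g 2 ν) :
    MemLp (fun q : α × β => f q.1 * g q.2) 2 (μ.prod ν) := by
  have hm : AEStronglyMeasurable (fun q : α × β => f q.1 * g q.2) (μ.prod ν) :=
    hf.1.comp_fst.mul hg.1.comp_snd
  refine (memLp_two_iff_integrable_sq_norm hm).2 ?_
  simpa only [norm_mul, mul_pow] using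
    ((memLp_two_iff_integrable_sq_norm hf.1).1 hf).mul_prod
      ((memLp_two_iff_integrable_sq_norm hg.1).1 hg)

lemma MemLp.conj_swap [SFinite μ] [SFinite ν] {b : α × β → 𝕜} (hb : MemLp b 2 (μ.prod ν)) :
    MemLp (fun q : β × α => conj (b q.swap)) 2 (ν.prod μ) :=
  (hb.comp_measurePreserving Measure.measurePreserving_swap).star

theorem adjoint_integralOperator [SFinite μ] [SFinite ν] {b : α × β → 𝕜}
    (hb : MemLp b 2 (μ.prod ν)) :
    (integralOperator hb).adjoint = integralOperator hb.conj_swap := by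
  refine ((ContinuousLinearMap.eq_adjoint_iff _ _).2 fun f g => ?_).symm
  set F : α × β → 𝕜 := fun q => conj (f q.1) * g q.2 * b q
  have hF : Integrable F (μ.prod ν) :=
    ((Lp.memLp f).star.mul_prod (Lp.memLp g)).integrable_mul hb
  calc inner 𝕜 (integralOperator hb.conj_swap f) g
      = ∫ y, conj (∫ x, conj (b (x, y)) * f x ∂μ) * g y ∂ν := by
        rw [L2.inner_def]
        refine integral_congr_ae ?_
        filter_upwards [coeFn_integralOperator hb.conj_swap f] with y hy
        rw [RCLike.inner_apply', hy]
        rfl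
    _ = ∫ y, ∫ x, F (x, y) ∂μ ∂ν := by
        refine integral_congr_ae (Filter.Eventually.of_forall fun y => ?_)
        dsimp only
        rw [← integral_conj, ← integral_mul_const]
        simp only [F, map_mul, RCLike.conj_conj]
        congr 1; ext x; ring
    _ = ∫ x, ∫ y, F (x, y) ∂ν ∂μ := (integral_integral_swap hF).symm
    _ = ∫ x, conj (f x) * ∫ y, b (x, y) * g y ∂ν ∂μ := by
        refine integral_congr_ae (Filter.Eventually.of_forall fun x => ?_)
        dsimp only
        rw [← integral_const_mul]
        congr 1; ext y; simp only [F]; ring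
    _ = inner 𝕜 f (integralOperator hb g) := by
        rw [L2.inner_def]
        refine integral_congr_ae ?_
        filter_upwards [coeFn_integralOperator hb g] with x hx
        rw [RCLike.inner_apply', hx]

end MeasureTheory

lemma memLp_comp_add_of_integrableOn_sq {ζ : ℝ} {A : ℝ → ℝ} (hA : Measurable A)
    (hint : IntegrableOn (fun p : ℝ × ℝ => A (p.1 + p.2) ^ 2) (Ioi ζ ×ˢ Ioi 0)) :
    MemLp (fun q : ℝ × ℝ => (A (q.2 + q.1) : ℂ)) 2
      ((volume.restrict (Ioi 0)).prod (volume.restrict (Ioi ζ))) := by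
  have h : MemLp (fun p : ℝ × ℝ => A (p.1 + p.2)) 2
      ((volume.restrict (Ioi ζ)).prod (volume.restrict (Ioi 0))) := by
    refine (memLp_two_iff_integrable_sq (hA.comp measurable_add).aestronglyMeasurable).2 ?_
    rwa [Measure.prod_restrict, ← Measure.volume_eq_prod]
  exact (h.comp_measurePreserving Measure.measurePreserving_swap).ofReal

/-- The positivity identity (6.51)–(6.52) for Christoffel–Darboux (Airy-type)
kernels `k(x,t) = ∫₀^∞ A(x+s)A(t+s) ds`: the corresponding integral operator
`K` on `L²(ζ, ∞)` is bounded self-adjoint and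
`⟨Kf, f⟩ = ∫₀^∞ |F(s)|² ds ≥ 0` with `F(s) = ∫_ζ^∞ A(x+s) f(x) dx`. -/
theorem stmt_9 (ζ : ℝ) (A : ℝ → ℝ) (hA : Measurable A)
    (hint : IntegrableOn (fun p : ℝ × ℝ => (A (p.1 + p.2)) ^ 2)
      (Set.Ioi ζ ×ˢ Set.Ioi (0 : ℝ))) :
    ∃ K : Lp ℂ 2 (volume.restrict (Set.Ioi ζ)) →L[ℂ]
          Lp ℂ 2 (volume.restrict (Set.Ioi ζ)),
      (∀ f : Lp ℂ 2 (volume.restrict (Set.Ioi ζ)),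
        ∀ᵐ x ∂(volume.restrict (Set.Ioi ζ)),
          (K f : ℝ → ℂ) x = ∫ t in Set.Ioi ζ,
            ((∫ s in Set.Ioi (0 : ℝ), A (x + s) * A (t + s) : ℝ) : ℂ) * f t) ∧
      IsSelfAdjoint K ∧
      (∀ f : Lp ℂ 2 (volume.restrict (Set.Ioi ζ)),
        (inner ℂ (K f) f : ℂ) =
          ((∫ s in Set.Ioi (0 : ℝ),
            ‖∫ x in Set.Ioi ζ, ((A (x + s) : ℝ) : ℂ) * f x‖ ^ 2 : ℝ) : ℂ) ∧
        0 ≤ (inner ℂ (K f) f : ℂ).re) := by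
  have hb := memLp_comp_add_of_integrableOn_sq hA hint
  set T := integralOperator hb
  have hK := ContinuousLinearMap.isPositive_adjoint_comp_self T
  refine ⟨T.adjoint ∘L T, fun f => ?_, hK.isSelfAdjoint,
    fun f => ⟨?_, hK.re_inner_nonneg_left f⟩⟩
  · rw [ContinuousLinearMap.comp_apply, adjoint_integralOperator]
    filter_upwards [coeFn_integralOperator_comp hb.conj_swap hb f] with x hx
    rw [hx]
    simp only [Prod.swap_prod_mk, Complex.conj_ofReal, ← Complex.ofReal_mul,
      integral_complex_ofReal]
  · rw [ContinuousLinearMap.comp_apply, ContinuousLinearMap.adjoint_inner_left,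
      L2.inner_self_eq_integral_norm_sq]
    congr 1
    refine integral_congr_ae ?_
    filter_upwards [coeFn_integralOperator hb f] with s hs
    rw [hs]
end

section
/- Let H be a complex separable Hilbert space with dim H ≥ 2 and let A be a compact operator on H. Then A has a nontrivial closed invariant subspace: there exists a closed subspace M of H with M ≠ {0}, M ≠ H, and A(M) ⊆ M. -/
open Metric Filter

lemma aux_approx {H : Type*} [NormedAddCommGroup H] [NormedSpace ℂ H] [CompleteSpace H]
    [Nontrivial H] (A : H →L[ℂ] H) {μ : ℂ} (hμ : μ ∈ spectrum ℂ A)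
    (hmax : spectralRadius ℂ A = (‖μ‖₊ : ENNReal)) (hμ0 : μ ≠ 0) {ε : ℝ} (hε : 0 < ε) :
    ∃ x : H, ‖x‖ = 1 ∧ ‖A x - μ • x‖ < ε := by
  by_contra hcon
  push_neg at hcon
  -- lower bound on all x
  have hlow : ∀ x : H, ε * ‖x‖ ≤ ‖A x - μ • x‖ := by
    intro x
    rcases eq_or_ne x 0 with rfl | hx
    · simp
    · have hxn : (0:ℝ) < ‖x‖ := norm_pos_iff.mpr hx
      have h1 : ‖(‖x‖⁻¹ : ℂ) • x‖ = 1 := by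
        rw [norm_smul]
        simp [norm_inv, hxn.ne']
      have := hcon _ h1
      have h2 : A ((‖x‖⁻¹ : ℂ) • x) - μ • ((‖x‖⁻¹ : ℂ) • x)
          = (‖x‖⁻¹ : ℂ) • (A x - μ • x) := by
        rw [map_smul, smul_sub, smul_comm]
      rw [h2, norm_smul] at this
      have h3 : ‖(‖x‖⁻¹ : ℂ)‖ = ‖x‖⁻¹ := by
        simp [norm_inv]
      rw [h3] at this
      have h4 := mul_le_mul_of_nonneg_right this hxn.le
      rwa [inv_mul_eq_div, div_mul_eq_mul_div, mul_div_assoc, div_self hxn.ne', mul_one] at h4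
  set t : ℝ := ε / (4 * (‖μ‖ + 1)) with ht
  have hμn : (0:ℝ) < ‖μ‖ := norm_pos_iff.mpr hμ0
  have ht0 : 0 < t := by positivity
  have htμ : t * ‖μ‖ ≤ ε / 4 := by
    rw [ht, div_mul_eq_mul_div, div_le_div_iff₀ (by positivity) (by norm_num)]
    nlinarith
  set μ' : ℂ := (1 + (t:ℂ)) * μ with hμ'
  have hμ'norm : ‖μ' - μ‖ = t * ‖μ‖ := by
    have : μ' - μ = (t:ℂ) * μ := by rw [hμ']; ring
    rw [this, norm_mul, Complex.norm_real, Real.norm_of_nonneg ht0.le]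
  have hμ'big : (‖μ‖₊ : ENNReal) < (‖μ'‖₊ : ENNReal) := by
    rw [ENNReal.coe_lt_coe, ← NNReal.coe_lt_coe, coe_nnnorm, coe_nnnorm, hμ', norm_mul]
    have : ‖(1 + (t:ℂ))‖ = 1 + t := by
      rw [show (1 + (t:ℂ)) = ((1+t : ℝ) : ℂ) by push_cast; ring, Complex.norm_real,
        Real.norm_of_nonneg (by linarith)]
    rw [this]
    nlinarith
  have hres : μ' ∈ resolventSet ℂ A :=
    spectrum.mem_resolventSet_of_spectralRadius_lt (by rw [hmax]; exact hμ'big)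
  rw [spectrum.mem_resolventSet_iff] at hres
  obtain ⟨u, hu⟩ := hres
  -- lower bound for u
  set c : ℝ := ε - t * ‖μ‖ with hc
  have hc0 : 0 < c := by rw [hc]; nlinarith
  have hulow : ∀ x : H, c * ‖x‖ ≤ ‖(u : H →L[ℂ] H) x‖ := by
    intro x
    have happ : (u : H →L[ℂ] H) x = μ' • x - A x := by
      rw [hu]
      simp [ContinuousLinearMap.sub_apply, Algebra.algebraMap_eq_smul_one]
    have h1 : μ' • x - A x = -(A x - μ • x) + (μ' - μ) • x := by
      rw [sub_smul]; abel
    rw [happ, h1]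
    calc c * ‖x‖ = ε * ‖x‖ - (t * ‖μ‖) * ‖x‖ := by rw [hc]; ring
      _ ≤ ‖A x - μ • x‖ - ‖(μ' - μ) • x‖ := by
          have := hlow x
          rw [norm_smul, hμ'norm]
          nlinarith [norm_nonneg x]
      _ ≤ ‖-(A x - μ • x) + (μ' - μ) • x‖ := by
          have h5 := norm_sub_norm_le (-(A x - μ • x)) (-((μ' - μ) • x))
          simp only [norm_neg, sub_neg_eq_add] at h5
          linarith
  -- bound on the inverse
  have huinv : ‖((u⁻¹ : (H →L[ℂ] H)ˣ) : H →L[ℂ] H)‖ ≤ c⁻¹ := by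
    apply ContinuousLinearMap.opNorm_le_bound _ (by positivity)
    intro y
    have h6 := hulow (((u⁻¹ : (H →L[ℂ] H)ˣ) : H →L[ℂ] H) y)
    have h7 : (u : H →L[ℂ] H) (((u⁻¹ : (H →L[ℂ] H)ˣ) : H →L[ℂ] H) y) = y := by
      rw [← ContinuousLinearMap.mul_apply, u.mul_inv, ContinuousLinearMap.one_apply]
    rw [h7] at h6
    rw [inv_mul_eq_div, le_div_iff₀ hc0, mul_comm]
    exact h6
  set w : H →L[ℂ] H := ((u⁻¹ : (H →L[ℂ] H)ˣ) : H →L[ℂ] H) * algebraMap ℂ (H →L[ℂ] H) (μ' - μ)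
    with hw
  have hwn : ‖w‖ < 1 := by
    have h8 : ‖algebraMap ℂ (H →L[ℂ] H) (μ' - μ)‖ ≤ ‖μ' - μ‖ := by
      rw [Algebra.algebraMap_eq_smul_one, norm_smul]
      calc ‖μ' - μ‖ * ‖(1 : H →L[ℂ] H)‖ ≤ ‖μ' - μ‖ * 1 := by
            have := ContinuousLinearMap.norm_id_le (𝕜 := ℂ) (E := H)
            rw [ContinuousLinearMap.one_def]
            nlinarith [norm_nonneg (μ' - μ)]
        _ = ‖μ' - μ‖ := mul_one _
    calc ‖w‖ ≤ ‖((u⁻¹ : (H →L[ℂ] H)ˣ) : H →L[ℂ] H)‖ * ‖algebraMap ℂ (H →L[ℂ] H) (μ' - μ)‖ :=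
          norm_mul_le _ _
      _ ≤ c⁻¹ * (t * ‖μ‖) := by
          rw [hμ'norm] at h8
          exact mul_le_mul huinv h8 (norm_nonneg _) (by positivity)
      _ < 1 := by
          rw [inv_mul_eq_div, div_lt_one hc0, hc]
          nlinarith
  have hunit : IsUnit (algebraMap ℂ (H →L[ℂ] H) μ - A) := by
    refine ⟨u * Units.oneSub w hwn, ?_⟩
    have h9 : ((u * Units.oneSub w hwn : (H →L[ℂ] H)ˣ) : H →L[ℂ] H)
        = (u : H →L[ℂ] H) * (1 - w) := rfl
    rw [h9, mul_sub, mul_one, hw, ← mul_assoc, u.mul_inv, one_mul, hu, map_sub]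
    abel
  rw [spectrum.mem_iff] at hμ
  exact hμ hunit

lemma aux_eigenvector {H : Type*} [NormedAddCommGroup H] [NormedSpace ℂ H] [CompleteSpace H]
    [Nontrivial H] (A : H →L[ℂ] H) (hA : IsCompactOperator (⇑A)) {μ : ℂ}
    (hμ : μ ∈ spectrum ℂ A) (hmax : spectralRadius ℂ A = (‖μ‖₊ : ENNReal)) (hμ0 : μ ≠ 0) :
    ∃ v : H, v ≠ 0 ∧ A v = μ • v := by
  have hx : ∀ n : ℕ, ∃ x : H, ‖x‖ = 1 ∧ ‖A x - μ • x‖ < 1 / (n + 1) :=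
    fun n => aux_approx A hμ hmax hμ0 (by positivity)
  choose xs hxs1 hxs2 using hx
  have hK : IsCompact (closure (⇑A '' closedBall 0 1)) := by
    have := IsCompactOperator.isCompact_closure_image_closedBall (𝕜₁ := ℂ)
      (f := (A : H →ₗ[ℂ] H)) hA 1
    simpa using this
  have hmem : ∀ n, A (xs n) ∈ closure (⇑A '' closedBall 0 1) := fun n =>
    subset_closure ⟨xs n, by simp [mem_closedBall, dist_zero_right, (hxs1 n).le], rfl⟩
  obtain ⟨y, hy, φ, hφ, hconv⟩ := hK.tendsto_subseq hmem
  have hdiff : Tendsto (fun n => A (xs (φ n)) - μ • xs (φ n)) atTop (nhds 0) := by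
    rw [tendsto_zero_iff_norm_tendsto_zero]
    apply squeeze_zero (fun n => norm_nonneg _) (fun n => (hxs2 (φ n)).le)
    apply squeeze_zero (fun n => by positivity)
      (g := fun n : ℕ => 1 / ((n : ℝ) + 1))
    · intro n
      apply div_le_div_of_nonneg_left one_pos.le (by positivity)
      have h10 : (n:ℝ) ≤ (φ n : ℝ) := Nat.cast_le.mpr hφ.le_apply
      linarith
    · exact tendsto_one_div_add_atTop_nhds_zero_nat
  have hμx : Tendsto (fun n => μ • xs (φ n)) atTop (nhds y) := by
    have := hconv.sub hdiff
    simpa using this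
  have hxconv : Tendsto (fun n => xs (φ n)) atTop (nhds (μ⁻¹ • y)) := by
    have := hμx.const_smul (μ⁻¹)
    simpa [smul_smul, inv_mul_cancel₀ hμ0] using this
  refine ⟨μ⁻¹ • y, ?_, ?_⟩
  · have hnorm : Tendsto (fun n => ‖xs (φ n)‖) atTop (nhds ‖μ⁻¹ • y‖) :=
      hxconv.norm
    have h1 : ‖μ⁻¹ • y‖ = 1 := by
      exact (tendsto_nhds_unique (tendsto_const_nhds.congr fun n => (hxs1 (φ n)).symm) hnorm).symm
    intro h0
    rw [h0, norm_zero] at h1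
    norm_num at h1
  · have hAconv : Tendsto (fun n => A (xs (φ n))) atTop (nhds (A (μ⁻¹ • y))) :=
      (A.continuous.tendsto _).comp hxconv
    have : A (μ⁻¹ • y) = y := tendsto_nhds_unique hAconv hconv
    rw [this, smul_smul, mul_inv_cancel₀ hμ0, one_smul]

lemma aux_hilden {H : Type*} [NormedAddCommGroup H] [NormedSpace ℂ H] [CompleteSpace H]
    (A : H →L[ℂ] H) (hA : IsCompactOperator (⇑A)) (hr : spectralRadius ℂ A = 0)
    (hA0 : A ≠ 0)
    (hcyc : ∀ y : H, y ≠ 0 →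
      Dense ((Submodule.span ℂ (Set.range fun n : ℕ => (A ^ n) y) : Submodule ℂ H) : Set H)) :
    False := by
  have hAn : (0:ℝ) < ‖A‖ := norm_pos_iff.mpr hA0
  obtain ⟨x, hx⟩ : ∃ x : H, A x ≠ 0 := by
    by_contra hc
    push_neg at hc
    exact hA0 (ContinuousLinearMap.ext fun x => by simp [hc x])
  have hAx : (0:ℝ) < ‖A x‖ := norm_pos_iff.mpr hx
  set x₀ : H := ((2 * ‖A‖ / ‖A x‖ : ℝ) : ℂ) • x with hx₀def
  have hAx₀ : ‖A x₀‖ = 2 * ‖A‖ := by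
    rw [hx₀def, map_smul, norm_smul, Complex.norm_real,
      Real.norm_of_nonneg (by positivity)]
    field_simp
  have hx₀2 : 2 ≤ ‖x₀‖ := by
    have h1 := A.le_opNorm x₀
    rw [hAx₀] at h1
    nlinarith
  -- the ball and the compact set
  set B : Set H := closedBall x₀ 1 with hBdef
  have hBlow : ∀ u ∈ B, ‖A‖ ≤ ‖A u‖ := by
    intro u hu
    rw [hBdef, mem_closedBall, dist_eq_norm] at hu
    have h1 : ‖A u - A x₀‖ ≤ ‖A‖ := by
      have := A.le_opNorm (u - x₀)
      rw [map_sub] at this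
      nlinarith [norm_nonneg (u - x₀)]
    have h2 := norm_sub_norm_le (A x₀) (A x₀ - A u)
    simp only [sub_sub_cancel] at h2
    rw [hAx₀] at h2
    rw [← norm_neg (A u - A x₀), neg_sub] at h1
    linarith
  set C : Set H := closure (⇑A '' B) with hCdef
  have hCcompact : IsCompact C := by
    have := IsCompactOperator.isCompact_closure_image_of_isVonNBounded (𝕜₂ := ℂ)
      (f := (A : H →ₗ[ℂ] H)) hA
      ((NormedSpace.isVonNBounded_iff (E := H) ℂ).mpr (Metric.isBounded_closedBall (x := x₀) (r := 1)))
    simpa using this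
  have hClow : ∀ y ∈ C, ‖A‖ ≤ ‖y‖ := by
    intro y hy
    have hcl : IsClosed {z : H | ‖A‖ ≤ ‖z‖} :=
      isClosed_le continuous_const continuous_norm
    have : C ⊆ {z : H | ‖A‖ ≤ ‖z‖} :=
      closure_minimal (by rintro - ⟨u, hu, rfl⟩; exact hBlow u hu) hcl
    exact this hy
  -- for each y in C, a polynomial in A sending y into the open ball around x₀
  have hBy : ∀ y ∈ C, ∃ By : H →L[ℂ] H, Commute A By ∧ ‖By y - x₀‖ < 1 := by
    intro y hy
    have hy0 : y ≠ 0 := by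
      intro h
      have h2 := hClow y hy
      rw [h, norm_zero] at h2
      linarith
    have hdense := hcyc y hy0
    have hx₀mem : x₀ ∈ closure ((Submodule.span ℂ (Set.range fun n : ℕ => (A ^ n) y) :
        Submodule ℂ H) : Set H) := hdense x₀
    rw [Metric.mem_closure_iff] at hx₀mem
    obtain ⟨z, hz, hzdist⟩ := hx₀mem 1 one_pos
    rw [SetLike.mem_coe, Finsupp.mem_span_range_iff_exists_finsupp] at hz
    obtain ⟨cf, hcf⟩ := hz
    refine ⟨cf.sum fun n a => a • A ^ n, ?_, ?_⟩
    · rw [Finsupp.sum]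
      exact Commute.sum_right _ _ _ fun n _ =>
        ((Commute.refl A).pow_right n).smul_right (cf n)
    · have happ : (cf.sum fun n a => a • A ^ n) y = z := by
        rw [← hcf, Finsupp.sum, Finsupp.sum, ContinuousLinearMap.sum_apply]
        simp [ContinuousLinearMap.smul_apply]
      rw [happ, ← dist_eq_norm, dist_comm]
      exact hzdist
  choose! Bf hBfcomm hBfball using hBy
  -- finite subcover
  obtain ⟨S, hSsub, hSfin, hScov⟩ := hCcompact.elim_finite_subcover_image
    (ι := H) (c := fun y => {w : H | ‖Bf y w - x₀‖ < 1})
    (fun y _ => isOpen_lt (by fun_prop) continuous_const)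
    (fun y hy => Set.mem_biUnion hy (hBfball y hy))
  obtain ⟨c, hc1, hcB⟩ : ∃ c : ℝ, 1 ≤ c ∧ ∀ y ∈ S, ‖Bf y‖ ≤ c := by
    refine ⟨1 + ∑ y ∈ hSfin.toFinset, ‖Bf y‖, ?_, ?_⟩
    · have : (0:ℝ) ≤ ∑ y ∈ hSfin.toFinset, ‖Bf y‖ :=
        Finset.sum_nonneg fun y _ => norm_nonneg _
      linarith
    · intro y hy
      have h1 : ‖Bf y‖ ≤ ∑ z ∈ hSfin.toFinset, ‖Bf z‖ :=
        Finset.single_le_sum (fun z _ => norm_nonneg (Bf z)) (hSfin.mem_toFinset.mpr hy)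
      linarith
  have hc0 : 0 < c := lt_of_lt_of_le one_pos hc1
  -- the iteration
  have hstep : ∀ n : ℕ, ∃ (u : H) (P : H →L[ℂ] H),
      u ∈ B ∧ Commute A P ∧ ‖P‖ ≤ c ^ n ∧ u = P ((A ^ n) x₀) := by
    intro n
    induction n with
    | zero =>
      refine ⟨x₀, 1, mem_closedBall_self one_pos.le, Commute.one_right A, ?_, by simp⟩
      rw [pow_zero, ContinuousLinearMap.one_def]
      exact ContinuousLinearMap.norm_id_le
    | succ n ih =>
      obtain ⟨u, P, huB, hcomm, hPn, hueq⟩ := ih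
      have hAuC : A u ∈ C := subset_closure ⟨u, huB, rfl⟩
      obtain ⟨y, hyS, hymem⟩ := Set.mem_iUnion₂.mp (hScov hAuC)
      refine ⟨Bf y (A u), Bf y * P, ?_, ?_, ?_, ?_⟩
      · rw [hBdef, mem_closedBall, dist_eq_norm]
        exact le_of_lt hymem
      · exact (hBfcomm y (hSsub hyS)).mul_right hcomm
      · calc ‖Bf y * P‖ ≤ ‖Bf y‖ * ‖P‖ := norm_mul_le _ _
          _ ≤ c * c ^ n := mul_le_mul (hcB y hyS) hPn (norm_nonneg _) hc0.le
          _ = c ^ (n + 1) := (pow_succ' c n).symm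
      · have h1 : A (P ((A ^ n) x₀)) = P ((A ^ (n + 1)) x₀) := by
          rw [← ContinuousLinearMap.mul_apply A P, hcomm.eq,
            ContinuousLinearMap.mul_apply, ← ContinuousLinearMap.mul_apply A (A ^ n),
            ← pow_succ']
        rw [hueq, h1, ← ContinuousLinearMap.mul_apply]
  -- quasinilpotent estimate
  obtain ⟨δ, hδ0, hcδ⟩ : ∃ δ : ℝ, 0 < δ ∧ c * δ ≤ 1 / 2 := by
    refine ⟨(2 * c)⁻¹, by positivity, ?_⟩
    have hcne : c ≠ 0 := hc0.ne'
    rw [mul_inv, mul_comm ((2:ℝ))⁻¹ c⁻¹, ← mul_assoc, mul_inv_cancel₀ hcne, one_mul]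
    norm_num
  have hgel := spectrum.pow_norm_pow_one_div_tendsto_nhds_spectralRadius A
  rw [hr] at hgel
  have hev1 : ∀ᶠ n : ℕ in atTop, ‖A ^ n‖ ^ (1 / (n:ℝ)) < δ := by
    filter_upwards [hgel.eventually_lt_const (ENNReal.ofReal_pos.mpr hδ0)] with n hn
    exact (ENNReal.ofReal_lt_ofReal_iff hδ0).mp hn
  have hev2 : ∀ᶠ n : ℕ in atTop, (1/2 : ℝ) ^ n * ‖x₀‖ < 1 := by
    have h2 : Filter.Tendsto (fun n : ℕ => (1/2 : ℝ) ^ n * ‖x₀‖) atTop (nhds (0 * ‖x₀‖)) :=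
      (tendsto_pow_atTop_nhds_zero_of_lt_one (by norm_num) (by norm_num)).mul_const _
    rw [zero_mul] at h2
    exact h2.eventually_lt_const one_pos
  obtain ⟨n, ⟨hnδ, hn12⟩, hn3⟩ :=
    ((hev1.and hev2).and (Filter.eventually_ge_atTop 1)).exists
  have hn0 : (n:ℝ) ≠ 0 := by
    have h0 : 0 < n := hn3
    positivity
  -- ‖A ^ n‖ ≤ δ ^ n
  have hAnδ : ‖A ^ n‖ ≤ δ ^ n := by
    have h1 : ‖A ^ n‖ = (‖A ^ n‖ ^ (1 / (n:ℝ))) ^ n := by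
      rw [← Real.rpow_natCast (‖A ^ n‖ ^ (1 / (n:ℝ))) n, ← Real.rpow_mul (norm_nonneg _),
        one_div, inv_mul_cancel₀ hn0, Real.rpow_one]
    rw [h1]
    exact pow_le_pow_left₀ (Real.rpow_nonneg (norm_nonneg _) _) hnδ.le n
  obtain ⟨u, P, huB, hcommP, hPle, hueq⟩ := hstep n
  have hu1 : 1 ≤ ‖u‖ := by
    rw [hBdef, mem_closedBall, dist_comm, dist_eq_norm] at huB
    have h2 := norm_sub_norm_le x₀ u
    have h3 : ‖x₀ - u‖ ≤ 1 := huB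
    linarith
  have hu2 : ‖u‖ ≤ c ^ n * ‖A ^ n‖ * ‖x₀‖ := by
    rw [hueq]
    calc ‖P ((A ^ n) x₀)‖ ≤ ‖P‖ * ‖(A ^ n) x₀‖ := P.le_opNorm _
      _ ≤ ‖P‖ * (‖A ^ n‖ * ‖x₀‖) := by
          have := (A ^ n).le_opNorm x₀
          nlinarith [norm_nonneg P, norm_nonneg ((A ^ n) x₀)]
      _ ≤ c ^ n * ‖A ^ n‖ * ‖x₀‖ := by
          have h4 : (0:ℝ) ≤ ‖A ^ n‖ * ‖x₀‖ := by positivity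
          nlinarith
  have hfinal : c ^ n * ‖A ^ n‖ * ‖x₀‖ < 1 := by
    calc c ^ n * ‖A ^ n‖ * ‖x₀‖ ≤ c ^ n * δ ^ n * ‖x₀‖ := by
          have h6 : (0:ℝ) ≤ c ^ n := by positivity
          exact mul_le_mul_of_nonneg_right (mul_le_mul_of_nonneg_left hAnδ h6)
            (norm_nonneg x₀)
      _ = (c * δ) ^ n * ‖x₀‖ := by rw [mul_pow]
      _ ≤ (1 / 2 : ℝ) ^ n * ‖x₀‖ := by
          exact mul_le_mul_of_nonneg_right
            (pow_le_pow_left₀ (by positivity) hcδ n) (norm_nonneg x₀)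
      _ < 1 := hn12
  linarith

lemma aux_rank {H : Type*} [NormedAddCommGroup H] [NormedSpace ℂ H] [CompleteSpace H]
    (hdim : 2 ≤ Module.rank ℂ H) (y : H)
    (hd : Dense ((Submodule.span ℂ {y} : Submodule ℂ H) : Set H)) : False := by
  have hclosed : IsClosed ((Submodule.span ℂ {y} : Submodule ℂ H) : Set H) :=
    (Submodule.span ℂ {y}).closed_of_finiteDimensional
  have htop : (Submodule.span ℂ {y} : Submodule ℂ H) = ⊤ := by
    apply Submodule.eq_top_iff'.mpr
    intro w
    have h3 := hd.closure_eq
    rw [hclosed.closure_eq] at h3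
    rw [← SetLike.mem_coe, h3]
    trivial
  have h1 : Module.rank ℂ H ≤ 1 := by
    have h2 := rank_span_le (R := ℂ) ({y} : Set H)
    rw [htop, Cardinal.mk_singleton] at h2
    rwa [rank_top] at h2
  have : (2 : Cardinal) ≤ 1 := le_trans hdim h1
  norm_num at this

/-- The Aronszajn–Smith theorem: every compact operator on a complex separable
Hilbert space of dimension at least 2 has a nontrivial closed invariant
subspace. -/
theorem stmt_10 {H : Type*} [NormedAddCommGroup H] [InnerProductSpace ℂ H]
    [CompleteSpace H] [TopologicalSpace.SeparableSpace H]
    (hdim : 2 ≤ Module.rank ℂ H)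
    (A : H →L[ℂ] H) (hA : IsCompactOperator (⇑A)) :
    ∃ M : Submodule ℂ H, IsClosed (M : Set H) ∧ M ≠ ⊥ ∧ M ≠ ⊤ ∧
      ∀ x ∈ M, A x ∈ M := by
  haveI : Nontrivial H :=
    rank_pos_iff_nontrivial.mp (lt_of_lt_of_le (by norm_num) hdim)
  by_cases hce : ∀ y : H, y ≠ 0 →
      Dense ((Submodule.span ℂ (Set.range fun n : ℕ => (A ^ n) y) : Submodule ℂ H) : Set H)
  · exfalso
    have key : ∀ y : H, y ≠ 0 →
        ¬ (∀ n : ℕ, (A ^ n) y ∈ (Submodule.span ℂ {y} : Submodule ℂ H)) := by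
      intro y hy hall
      have hle : Submodule.span ℂ (Set.range fun n : ℕ => (A ^ n) y)
          ≤ Submodule.span ℂ {y} :=
        Submodule.span_le.mpr (by rintro - ⟨n, rfl⟩; exact hall n)
      exact aux_rank hdim y (Dense.mono (SetLike.coe_subset_coe.mpr hle) (hce y hy))
    by_cases hA0 : A = 0
    · obtain ⟨y, hy⟩ := exists_ne (0 : H)
      refine key y hy fun n => ?_
      match n with
      | 0 => simpa using Submodule.mem_span_singleton_self y
      | (m+1) =>
        rw [hA0, zero_pow (Nat.succ_ne_zero m), ContinuousLinearMap.zero_apply]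
        exact Submodule.zero_mem _
    · rcases eq_or_ne (spectralRadius ℂ A) 0 with hr | hr
      · exact aux_hilden A hA hr hA0 hce
      · obtain ⟨μ, hμmem, hμeq⟩ := spectrum.exists_nnnorm_eq_spectralRadius (a := A)
        have hμ0 : μ ≠ 0 := by
          intro h
          rw [h] at hμeq
          apply hr
          rw [← hμeq]
          simp
        obtain ⟨v, hv0, hveq⟩ := aux_eigenvector A hA hμmem hμeq.symm hμ0
        refine key v hv0 fun n => ?_
        have hpow : (A ^ n) v = μ ^ n • v := by
          induction n with
          | zero => simp
          | succ m ih =>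
            rw [pow_succ', ContinuousLinearMap.mul_apply, ih, map_smul, hveq,
              smul_smul, ← pow_succ]
        rw [hpow]
        exact Submodule.smul_mem _ _ (Submodule.mem_span_singleton_self v)
  · push_neg at hce
    obtain ⟨y, hy0, hnd⟩ := hce
    set M := (Submodule.span ℂ (Set.range fun n : ℕ => (A ^ n) y)).topologicalClosure with hM
    have hinv : ∀ z ∈ Submodule.span ℂ (Set.range fun n : ℕ => (A ^ n) y),
        A z ∈ Submodule.span ℂ (Set.range fun n : ℕ => (A ^ n) y) := by
      intro z hz
      induction hz using Submodule.span_induction with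
      | mem w hw =>
        obtain ⟨n, rfl⟩ := hw
        apply Submodule.subset_span
        exact ⟨n + 1, by
          show (A ^ (n + 1)) y = A ((A ^ n) y)
          rw [pow_succ', ContinuousLinearMap.mul_apply]⟩
      | zero => simp
      | add a b _ _ ha hb => rw [map_add]; exact Submodule.add_mem _ ha hb
      | smul a w _ hw => rw [map_smul]; exact Submodule.smul_mem _ _ hw
    refine ⟨M, Submodule.isClosed_topologicalClosure _, ?_, ?_, ?_⟩
    · intro hbot
      apply hy0
      have hymem : y ∈ M := by
        apply Submodule.le_topologicalClosure
        apply Submodule.subset_span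
        exact ⟨0, by simp⟩
      rw [hbot] at hymem
      simpa using hymem
    · intro htop
      exact hnd (Submodule.dense_iff_topologicalClosure_eq_top.mpr htop)
    · intro z hz
      have hz' : z ∈ closure ((Submodule.span ℂ (Set.range fun n : ℕ => (A ^ n) y) :
          Submodule ℂ H) : Set H) := hz
      exact map_mem_closure A.continuous hz' fun w hw => hinv w hw
end

section
/- Let H be a complex separable Hilbert space and A a compact operator on H. Then A belongs to the class T: for every pair of closed subspaces H₁ ⊆ H₂ of H, each invariant under A, with dim(H₂ ⊖ H₁) > 1, there exists a closed subspace H₃ invariant under A with H₁ ⊆ H₃ ⊆ H₂, H₃ ≠ H₁, and H₃ ≠ H₂. -/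
/-!
Let `K = H₂ ⊓ H₁ᗮ` and let `P` be the orthogonal projection onto `K`. The compression
`B = P ∘ A|_K` is compact, and if `M ⊆ K` is a closed `B`-invariant subspace then
`{x ∈ H₂ | P x ∈ M}` is closed and `A`-invariant (for `x ∈ H₂` we have `x - P x ∈ H₁`), and it
lies strictly between `H₁` and `H₂` as soon as `M ≠ ⊥, ⊤`. So it suffices to show that a compact
operator `B` on a complex Banach space of dimension `> 1` has a nontrivial closed invariant
subspace (Aronszajn–Smith).

If it had none, `B` would have no eigenvector (its span would be invariant), so by the Fredholm
alternative `σ(B) = {0}`; and for every `y ≠ 0` the orbit `{p(B) y | p ∈ ℂ[X]}` would be dense,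
its closure being invariant. Hilden's argument excludes this: pick a ball `U = B(x₀, r)` with
`r < ‖x₀‖` and `0 ∉ C = closure (B U)`. The compact set `C` is covered by finitely many of the
open sets `p(B)⁻¹ U`, say with `‖p(B)‖ ≤ c`, so iterating yields `q` with `‖q(B)‖ ≤ cⁿ` and
`q(B) Bⁿ x₀ ∈ U`. Hence `‖x₀‖ - r < cⁿ ‖Bⁿ‖ ‖x₀‖`, whereas `cⁿ ‖Bⁿ‖ → 0` by Gelfand's formula.
-/

open Filter Topology Polynomial Metric

theorem tendsto_pow_mul_norm_pow_of_spectralRadius_eq_zero {A : Type*} [NormedRing A]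
    [NormedAlgebra ℂ A] [CompleteSpace A] {a : A} (ha : spectralRadius ℂ a = 0) (c : ℝ) :
    Tendsto (fun n : ℕ => c ^ n * ‖a ^ n‖) atTop (𝓝 0) := by
  have hroot : Tendsto (fun n : ℕ => ‖a ^ n‖ ^ (1 / n : ℝ)) atTop (𝓝 0) := by
    have h := spectrum.pow_norm_pow_one_div_tendsto_nhds_spectralRadius a
    rw [ha] at h
    refine ((ENNReal.tendsto_toReal ENNReal.zero_ne_top).comp h).congr fun n => ?_
    simp [Real.rpow_nonneg (norm_nonneg _)]
  have hsmall : ∀ᶠ n : ℕ in atTop, |c| * ‖a ^ n‖ ^ (1 / n : ℝ) ≤ 1 / 2 :=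
    (hroot.const_mul |c|).eventually (ge_mem_nhds (by norm_num))
  refine squeeze_zero_norm' ?_ (tendsto_pow_atTop_nhds_zero_of_lt_one (r := (1 / 2 : ℝ))
    (by norm_num) (by norm_num))
  filter_upwards [hsmall, eventually_ne_atTop 0] with n hn hn0
  calc ‖c ^ n * ‖a ^ n‖‖ = (|c| * ‖a ^ n‖ ^ (1 / n : ℝ)) ^ n := by
        rw [mul_pow, one_div, Real.rpow_inv_natCast_pow (norm_nonneg _) hn0, Real.norm_eq_abs,
          abs_mul, abs_pow, abs_norm]
    _ ≤ (1 / 2) ^ n := pow_le_pow_left₀ (by positivity) hn n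

theorem ContinuousLinearMap.exists_zero_notMem_closure_image_closedBall {𝕜 W : Type*}
    [NormedField 𝕜] [NormedAddCommGroup W] [NormedSpace 𝕜 W] {B : W →L[𝕜] W} (hB : B ≠ 0) :
    ∃ x₀ : W, ∃ r : ℝ, 0 < r ∧ r < ‖x₀‖ ∧ (0 : W) ∉ closure (B '' closedBall x₀ r) := by
  obtain ⟨x₀, hx₀⟩ : ∃ x, B x ≠ 0 := by
    by_contra! h
    exact hB (ContinuousLinearMap.ext h)
  have hBx₀ : 0 < ‖B x₀‖ := norm_pos_iff.2 hx₀
  set V := {z : W | ‖B x₀‖ / 2 ≤ ‖z‖}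
  obtain ⟨r, hr, hball⟩ := nhds_basis_closedBall.mem_iff.1 <|
    (isOpen_lt continuous_const (continuous_norm.comp B.continuous)).mem_nhds
      (half_lt_self hBx₀)
  have himage : B '' closedBall x₀ r ⊆ V :=
    Set.image_subset_iff.2 fun y hy => (show ‖B x₀‖ / 2 < ‖B y‖ from hball hy).le
  have h0V : (0 : W) ∉ V := by simpa [V] using hBx₀
  refine ⟨x₀, r, hr, ?_, fun h0 => h0V ?_⟩
  · by_contra! h
    exact h0V (himage ⟨0, by simpa [dist_comm] using h, map_zero B⟩)
  · exact closure_minimal himage (isClosed_le continuous_const continuous_norm) h0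

section InvariantSubspace

variable {W : Type*} [NormedAddCommGroup W] [NormedSpace ℂ W] {B : W →L[ℂ] W}

theorem exists_aeval_apply_pow_mem {U : Set W} {x₀ : W} (hx₀ : x₀ ∈ U) {c : ℝ}
    (hstep : ∀ x ∈ U, ∃ p : ℂ[X], ‖aeval B p‖ ≤ c ∧ aeval B p (B x) ∈ U) (n : ℕ) :
    ∃ q : ℂ[X], ‖aeval B q‖ ≤ c ^ n ∧ aeval B q ((B ^ n) x₀) ∈ U := by
  obtain ⟨p₀, hp₀, -⟩ := hstep x₀ hx₀
  have hc : 0 ≤ c := (norm_nonneg _).trans hp₀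
  induction n with
  | zero => exact ⟨1, by rw [map_one, pow_zero]; exact ContinuousLinearMap.norm_id_le, by simpa⟩
  | succ n ih =>
    obtain ⟨q, hq, hqU⟩ := ih
    obtain ⟨p, hp, hpU⟩ := hstep _ hqU
    refine ⟨p * q, ?_, ?_⟩
    · rw [map_mul, pow_succ']
      exact (norm_mul_le _ _).trans (mul_le_mul hp hq (norm_nonneg _) hc)
    · have h : aeval B (p * q) * B ^ (n + 1) = aeval B p * B * (aeval B q * B ^ n) := by
        simpa using congrArg (aeval B) (by ring : p * q * X ^ (n + 1) = p * X * (q * X ^ n))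
      convert hpU using 1
      exact congrArg (· x₀) h

theorem IsCompactOperator.exists_ne_zero_not_dense_range_aeval_apply [CompleteSpace W]
    (hB : IsCompactOperator B) (hB₀ : B ≠ 0) (hrad : spectralRadius ℂ B = 0) :
    ∃ y : W, y ≠ 0 ∧ ¬Dense (Set.range fun p : ℂ[X] => aeval B p y) := by
  by_contra! hdense
  obtain ⟨x₀, r, hr, hrx₀, h0C⟩ := B.exists_zero_notMem_closure_image_closedBall hB₀
  set C := closure (B '' closedBall x₀ r)
  have hcover : C ⊆ ⋃ p : ℂ[X], aeval B p ⁻¹' ball x₀ r := by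
    intro z hz
    obtain ⟨_, hp, p, rfl⟩ := (hdense z (ne_of_mem_of_not_mem hz h0C)).inter_open_nonempty _
      isOpen_ball (nonempty_ball.2 hr)
    exact Set.mem_iUnion.2 ⟨p, hp⟩
  obtain ⟨t, ht⟩ := (hB.isCompact_closure_image_of_bounded isBounded_closedBall)
    |>.elim_finite_subcover _ (fun p => isOpen_ball.preimage (aeval B p).continuous) hcover
  obtain ⟨c, hc⟩ := (t.finite_toSet.image fun p => ‖aeval B p‖).bddAbove
  have hstep : ∀ x ∈ ball x₀ r, ∃ p : ℂ[X], ‖aeval B p‖ ≤ c ∧ aeval B p (B x) ∈ ball x₀ r := by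
    intro x hx
    obtain ⟨p, hpt, hp⟩ := Set.mem_iUnion₂.1 <|
      ht (subset_closure (Set.mem_image_of_mem B (ball_subset_closedBall hx)))
    exact ⟨p, hc ⟨p, hpt, rfl⟩, hp⟩
  obtain ⟨n, hn⟩ := ((tendsto_pow_mul_norm_pow_of_spectralRadius_eq_zero hrad c).mul_const ‖x₀‖
    |>.eventually (gt_mem_nhds (by linarith : 0 * ‖x₀‖ < ‖x₀‖ - r))).exists
  obtain ⟨q, hq, hqx₀⟩ := exists_aeval_apply_pow_mem (mem_ball_self hr) hstep n
  have hlow : ‖x₀‖ - r < ‖aeval B q ((B ^ n) x₀)‖ := by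
    rw [mem_ball, dist_eq_norm, norm_sub_rev] at hqx₀
    linarith [norm_sub_norm_le x₀ (aeval B q ((B ^ n) x₀))]
  have hup : ‖aeval B q ((B ^ n) x₀)‖ ≤ c ^ n * ‖B ^ n‖ * ‖x₀‖ := calc
    _ ≤ ‖aeval B q‖ * (‖B ^ n‖ * ‖x₀‖) :=
        ((aeval B q).le_opNorm _).trans (by gcongr; exact (B ^ n).le_opNorm x₀)
    _ ≤ c ^ n * ‖B ^ n‖ * ‖x₀‖ := by rw [mul_assoc]; gcongr
  linarith

theorem eq_zero_of_apply_eq_smul_of_forall_invariant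
    (htrans : ∀ M : Submodule ℂ W, IsClosed (M : Set W) → (∀ x ∈ M, B x ∈ M) → M ≠ ⊥ → M = ⊤)
    (hW : 1 < Module.rank ℂ W) {y : W} {μ : ℂ} (hy : B y = μ • y) : y = 0 := by
  by_contra hy₀
  have hspan : ℂ ∙ y = ⊤ := by
    refine htrans _ (Submodule.closed_of_finiteDimensional _) (fun x hx => ?_)
      (mt Submodule.span_singleton_eq_bot.1 hy₀)
    obtain ⟨a, rfl⟩ := Submodule.mem_span_singleton.1 hx
    rw [map_smul, hy]
    exact Submodule.smul_mem _ _ (Submodule.smul_mem _ _ (Submodule.mem_span_singleton_self y))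
  have hrank : Module.rank ℂ (ℂ ∙ y) ≤ 1 := by simpa using rank_span_le ({y} : Set W)
  rw [hspan, rank_top] at hrank
  exact not_le.2 hW hrank

theorem dense_range_aeval_apply_of_forall_invariant
    (htrans : ∀ M : Submodule ℂ W, IsClosed (M : Set W) → (∀ x ∈ M, B x ∈ M) → M ≠ ⊥ → M = ⊤)
    {y : W} (hy : y ≠ 0) : Dense (Set.range fun p : ℂ[X] => aeval B p y) := by
  set M :=
    LinearMap.range ((ContinuousLinearMap.apply ℂ W y).toLinearMap ∘ₗ (aeval B).toLinearMap)
  have hM : (M : Set W) = Set.range fun p : ℂ[X] => aeval B p y := LinearMap.coe_range _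
  have hMB : Set.MapsTo B M M := by
    rw [hM]
    rintro _ ⟨p, rfl⟩
    exact ⟨X * p, by simp⟩
  rw [← hM, Submodule.dense_iff_topologicalClosure_eq_top]
  refine htrans _ M.isClosed_topologicalClosure (hMB.closure B.continuous) ?_
  exact (Submodule.ne_bot_iff _).2 ⟨y, M.le_topologicalClosure ⟨1, by simp⟩, hy⟩

theorem IsCompactOperator.exists_closed_invariant_ne_bot_ne_top [CompleteSpace W]
    (hB : IsCompactOperator B) (hW : 1 < Module.rank ℂ W) :
    ∃ M : Submodule ℂ W, IsClosed (M : Set W) ∧ (∀ x ∈ M, B x ∈ M) ∧ M ≠ ⊥ ∧ M ≠ ⊤ := by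
  by_contra! htrans
  have : Nontrivial W := rank_pos_iff_nontrivial.1 (zero_lt_one.trans hW)
  have heig : ∀ {y : W} {μ : ℂ}, B y = μ • y → y = 0 :=
    eq_zero_of_apply_eq_smul_of_forall_invariant htrans hW
  have hB₀ : B ≠ 0 := by
    obtain ⟨y, hy⟩ := exists_ne (0 : W)
    rintro rfl
    exact hy (heig (μ := 0) (by simp))
  have hrad : spectralRadius ℂ B = 0 := by
    refine le_antisymm (iSup₂_le fun μ hμ => ?_) bot_le
    obtain rfl : μ = 0 := by
      by_contra hμ₀
      obtain ⟨y, hy⟩ := ((hB.hasEigenvalue_iff_mem_spectrum hμ₀).2 hμ).exists_hasEigenvector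
      exact hy.2 (heig (Module.End.mem_eigenspace_iff.1 hy.1))
    simp
  obtain ⟨y, hy, hnd⟩ := hB.exists_ne_zero_not_dense_range_aeval_apply hB₀ hrad
  exact hnd (dense_range_aeval_apply_of_forall_invariant htrans hy)

end InvariantSubspace

section Compression

variable {𝕜 E : Type*} [RCLike 𝕜] [NormedAddCommGroup E] [InnerProductSpace 𝕜 E]

theorem Submodule.inf_orthogonal_inf_orthogonal_le {H₁ H₂ : Submodule 𝕜 E}
    [H₁.HasOrthogonalProjection] (hle : H₁ ≤ H₂) : H₂ ⊓ (H₂ ⊓ H₁ᗮ)ᗮ ≤ H₁ := by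
  rintro x ⟨hx₂, hx⟩
  have hP₁ := H₁.starProjection_apply_mem x
  have hH₁ : H₁ ≤ (H₂ ⊓ H₁ᗮ)ᗮ :=
    H₁.le_orthogonal_orthogonal.trans (Submodule.orthogonal_le inf_le_right)
  have h : x - H₁.starProjection x ∈ (H₂ ⊓ H₁ᗮ) ⊓ (H₂ ⊓ H₁ᗮ)ᗮ :=
    ⟨⟨H₂.sub_mem hx₂ (hle hP₁), H₁.sub_starProjection_mem_orthogonal x⟩, sub_mem hx (hH₁ hP₁)⟩
  rw [Submodule.inf_orthogonal_eq_bot, Submodule.mem_bot, sub_eq_zero] at h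
  exact h ▸ hP₁

theorem exists_invariant_between_of_compression (A : E →L[𝕜] E) {H₁ H₂ : Submodule 𝕜 E}
    [H₁.HasOrthogonalProjection] [(H₂ ⊓ H₁ᗮ).HasOrthogonalProjection]
    (h₂c : IsClosed (H₂ : Set E)) (h₁i : ∀ x ∈ H₁, A x ∈ H₁) (h₂i : ∀ x ∈ H₂, A x ∈ H₂)
    (hle : H₁ ≤ H₂) {M : Submodule 𝕜 ↥(H₂ ⊓ H₁ᗮ)} (hMc : IsClosed (M : Set ↥(H₂ ⊓ H₁ᗮ)))
    (hMi : ∀ x ∈ M, (H₂ ⊓ H₁ᗮ).orthogonalProjectionOnto (A x) ∈ M) (hM₀ : M ≠ ⊥)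
    (hM₁ : M ≠ ⊤) :
    ∃ H₃ : Submodule 𝕜 E, IsClosed (H₃ : Set E) ∧ (∀ x ∈ H₃, A x ∈ H₃) ∧
      H₁ ≤ H₃ ∧ H₃ ≤ H₂ ∧ H₃ ≠ H₁ ∧ H₃ ≠ H₂ := by
  have hKc : H₂ ⊓ (H₂ ⊓ H₁ᗮ)ᗮ ≤ H₁ := Submodule.inf_orthogonal_inf_orthogonal_le hle
  have hH₁K : H₁ ≤ (H₂ ⊓ H₁ᗮ)ᗮ :=
    H₁.le_orthogonal_orthogonal.trans (Submodule.orthogonal_le inf_le_right)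
  have hK₂ : H₂ ⊓ H₁ᗮ ≤ H₂ := inf_le_left
  have hK₁ : H₂ ⊓ H₁ᗮ ≤ H₁ᗮ := inf_le_right
  generalize H₂ ⊓ H₁ᗮ = K at *
  set P := K.orthogonalProjectionOnto
  have hPK : ∀ k : K, P k = k := K.orthogonalProjectionOnto_mem_subspace_eq_self
  refine ⟨H₂ ⊓ M.comap (P : E →ₗ[𝕜] K), h₂c.inter (hMc.preimage P.continuous), ?_,
    fun x hx => ⟨hle hx, ?_⟩, inf_le_left, fun h => ?_, fun h => ?_⟩
  · rintro x ⟨hx₂, hxM⟩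
    refine ⟨h₂i x hx₂, ?_⟩
    have hx₁ : x - K.starProjection x ∈ H₁ :=
      hKc ⟨H₂.sub_mem hx₂ (hK₂ (K.starProjection_apply_mem x)),
        K.sub_starProjection_mem_orthogonal x⟩
    have : P (A x) = P (A (P x)) := by
      rw [← sub_eq_zero, ← map_sub, ← map_sub, K.orthogonalProjectionOnto_eq_zero_iff]
      exact hH₁K (h₁i _ hx₁)
    simpa [this] using hMi _ hxM
  · show P x ∈ M
    rw [K.orthogonalProjectionOnto_eq_zero_iff.2 (hH₁K hx)]
    exact M.zero_mem
  · obtain ⟨m, hm, hm₀⟩ := M.ne_bot_iff.1 hM₀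
    have hm₃ : (m : E) ∈ H₂ ⊓ M.comap (P : E →ₗ[𝕜] K) := ⟨hK₂ m.2, by simpa [hPK] using hm⟩
    rw [h] at hm₃
    exact hm₀ <| Subtype.ext <|
      (Submodule.mem_bot 𝕜).1 (H₁.inf_orthogonal_eq_bot ▸ ⟨hm₃, hK₁ m.2⟩)
  · obtain ⟨k, -, hk⟩ := SetLike.exists_of_lt (lt_top_iff_ne_top.2 hM₁)
    have hk₃ : (k : E) ∈ H₂ ⊓ M.comap (P : E →ₗ[𝕜] K) := by
      rw [h]
      exact hK₂ k.2
    exact hk (by simpa [hPK] using hk₃.2)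

end Compression

theorem stmt_11_general {H : Type*} [NormedAddCommGroup H] [InnerProductSpace ℂ H]
    [CompleteSpace H]
    (A : H →L[ℂ] H) (hA : IsCompactOperator (⇑A)) :
    ∀ H₁ H₂ : Submodule ℂ H,
      IsClosed (H₁ : Set H) → IsClosed (H₂ : Set H) →
      (∀ x ∈ H₁, A x ∈ H₁) → (∀ x ∈ H₂, A x ∈ H₂) →
      H₁ ≤ H₂ → 1 < Module.rank ℂ ↥(H₂ ⊓ H₁ᗮ) →
      ∃ H₃ : Submodule ℂ H, IsClosed (H₃ : Set H) ∧ (∀ x ∈ H₃, A x ∈ H₃) ∧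
        H₁ ≤ H₃ ∧ H₃ ≤ H₂ ∧ H₃ ≠ H₁ ∧ H₃ ≠ H₂ := by
  intro H₁ H₂ h₁c h₂c h₁i h₂i hle hrank
  have : CompleteSpace H₁ := h₁c.completeSpace_coe
  have : CompleteSpace ↥(H₂ ⊓ H₁ᗮ) := (h₂c.inter H₁.isClosed_orthogonal).completeSpace_coe
  have hB : IsCompactOperator
      ((H₂ ⊓ H₁ᗮ).orthogonalProjectionOnto ∘L A ∘L (H₂ ⊓ H₁ᗮ).subtypeL) :=
    (hA.comp_clm (H₂ ⊓ H₁ᗮ).subtypeL).clm_comp (H₂ ⊓ H₁ᗮ).orthogonalProjectionOnto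
  obtain ⟨M, hMc, hMi, hM₀, hM₁⟩ := hB.exists_closed_invariant_ne_bot_ne_top hrank
  exact exists_invariant_between_of_compression A h₂c h₁i h₂i hle hMc hMi hM₀ hM₁

/-- Every compact operator on a complex separable Hilbert space belongs to the
class T: between any two closed invariant subspaces `H₁ ⊆ H₂` with
`dim(H₂ ⊖ H₁) > 1` there is a strictly intermediate closed invariant
subspace. -/
theorem stmt_11 {H : Type*} [NormedAddCommGroup H] [InnerProductSpace ℂ H]
    [CompleteSpace H] [TopologicalSpace.SeparableSpace H]
    (A : H →L[ℂ] H) (hA : IsCompactOperator (⇑A)) :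
    ∀ H₁ H₂ : Submodule ℂ H,
      IsClosed (H₁ : Set H) → IsClosed (H₂ : Set H) →
      (∀ x ∈ H₁, A x ∈ H₁) → (∀ x ∈ H₂, A x ∈ H₂) →
      H₁ ≤ H₂ → 1 < Module.rank ℂ ↥(H₂ ⊓ H₁ᗮ) →
      ∃ H₃ : Submodule ℂ H, IsClosed (H₃ : Set H) ∧ (∀ x ∈ H₃, A x ∈ H₃) ∧
        H₁ ≤ H₃ ∧ H₃ ≤ H₂ ∧ H₃ ≠ H₁ ∧ H₃ ≠ H₂ :=
  stmt_11_general A hA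
end

section
/- Let 0 < ω ≤ ∞, let v : (0, ω) → ℝ be continuous, and let A : (0, ω) → ℝ be twice continuously differentiable with A″(x) = v(x)A(x) for all x ∈ (0, ω). Define k(x, t) = (A(x)A′(t) − A′(x)A(t))/(π(x − t)) for x, t ∈ (0, ω) with x ≠ t. Then for all x ≠ t in (0, ω): ∂k/∂x (x, t) + ∂k/∂t (x, t) = A(t)·((v(t) − v(x))/(π(x − t)))·A(x). -/
open scoped ENNReal

/-- Lemma 10.1: for a solution `A` of `A'' = vA` on `(0, ω)` (with `v`
continuous and `A` twice continuously differentiable) and the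
Christoffel–Darboux type kernel `k(x,t) = (A(x)A'(t) - A'(x)A(t))/(π(x - t))`,
one has `∂k/∂x + ∂k/∂t = A(t)·((v(t) - v(x))/(π(x - t)))·A(x)` for `x ≠ t`. -/
theorem stmt_16 (ω : ℝ≥0∞) (hω : 0 < ω)
    (D : Set ℝ) (hD : D = {x : ℝ | 0 < x ∧ ENNReal.ofReal x < ω})
    (v A A' A'' : ℝ → ℝ)
    (hv : ContinuousOn v D)
    (hderiv1 : ∀ x ∈ D, HasDerivAt A (A' x) x)
    (hderiv2 : ∀ x ∈ D, HasDerivAt A' (A'' x) x)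
    (hcont : ContinuousOn A'' D)
    (heq : ∀ x ∈ D, A'' x = v x * A x)
    (k : ℝ → ℝ → ℝ)
    (hk : ∀ x t : ℝ, x ≠ t →
      k x t = (A x * A' t - A' x * A t) / (Real.pi * (x - t))) :
    ∀ x ∈ D, ∀ t ∈ D, x ≠ t →
      ∃ kx kt : ℝ,
        HasDerivAt (fun u => k u t) kx x ∧
        HasDerivAt (fun u => k x u) kt t ∧
        kx + kt = A t * ((v t - v x) / (Real.pi * (x - t))) * A x := by
  intro x hx t ht hxt
  have hπ : Real.pi ≠ 0 := Real.pi_ne_zero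
  have hsub : x - t ≠ 0 := sub_ne_zero.mpr hxt
  have hden : Real.pi * (x - t) ≠ 0 := mul_ne_zero hπ hsub
  -- derivative in x
  have h1 : HasDerivAt (fun u => A u * A' t - A' u * A t)
      (A' x * A' t - A'' x * A t) x :=
    ((hderiv1 x hx).mul_const _).sub ((hderiv2 x hx).mul_const _)
  have h2 : HasDerivAt (fun u : ℝ => Real.pi * (u - t)) Real.pi x := by
    simpa using ((hasDerivAt_id x).sub_const t).const_mul Real.pi
  have hdx : HasDerivAt (fun u => (A u * A' t - A' u * A t) / (Real.pi * (u - t)))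
      (((A' x * A' t - A'' x * A t) * (Real.pi * (x - t)) -
        (A x * A' t - A' x * A t) * Real.pi) / (Real.pi * (x - t)) ^ 2) x :=
    h1.div h2 hden
  have hex : (fun u => k u t) =ᶠ[nhds x]
      (fun u => (A u * A' t - A' u * A t) / (Real.pi * (u - t))) := by
    filter_upwards [eventually_ne_nhds hxt] with u hu
    exact hk u t hu
  have hkx : HasDerivAt (fun u => k u t)
      (((A' x * A' t - A'' x * A t) * (Real.pi * (x - t)) -
        (A x * A' t - A' x * A t) * Real.pi) / (Real.pi * (x - t)) ^ 2) x :=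
    hdx.congr_of_eventuallyEq hex
  -- derivative in t
  have h3 : HasDerivAt (fun s => A x * A' s - A' x * A s)
      (A x * A'' t - A' x * A' t) t :=
    ((hderiv2 t ht).const_mul _).sub ((hderiv1 t ht).const_mul _)
  have h4 : HasDerivAt (fun s : ℝ => Real.pi * (x - s)) (-Real.pi) t := by
    simpa using ((hasDerivAt_id t).const_sub x).const_mul Real.pi
  have hdt : HasDerivAt (fun s => (A x * A' s - A' x * A s) / (Real.pi * (x - s)))
      (((A x * A'' t - A' x * A' t) * (Real.pi * (x - t)) -
        (A x * A' t - A' x * A t) * (-Real.pi)) / (Real.pi * (x - t)) ^ 2) t :=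
    h3.div h4 hden
  have het : (fun s => k x s) =ᶠ[nhds t]
      (fun s => (A x * A' s - A' x * A s) / (Real.pi * (x - s))) := by
    filter_upwards [eventually_ne_nhds hxt.symm] with s hs
    exact hk x s hs.symm
  have hkt : HasDerivAt (fun s => k x s)
      (((A x * A'' t - A' x * A' t) * (Real.pi * (x - t)) -
        (A x * A' t - A' x * A t) * (-Real.pi)) / (Real.pi * (x - t)) ^ 2) t :=
    hdt.congr_of_eventuallyEq het
  refine ⟨_, _, hkx, hkt, ?_⟩
  rw [heq x hx, heq t ht]
  field_simp
  ring
end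

section
/- Let v : (0, ∞) → ℝ be continuous and A : (0, ∞) → ℝ twice continuously differentiable with A″(x) = v(x)A(x) for all x > 0, and define k(x, t) = (A(x)A′(t) − A′(x)A(t))/(π(x − t)) for x ≠ t. Assume: (i) for all x ≠ t > 0 the function u ↦ A(u + x)·(v(u + x) − v(u + t))·A(u + t) is Lebesgue integrable on (0, ∞), with the integrability locally uniform as required in (10.8); and (ii) for each fixed η ≠ 0, k((ζ + η)/2, (ζ − η)/2) → 0 as ζ → +∞. Then for all x ≠ t > 0: k(x, t) = ∫₀^∞ A(u + x)·((v(u + x) − v(u + t))/(π(x − t)))·A(u + t) du. -/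
/-!
For `x ≠ t` the numerator of `k(u + x, u + t)` is the Wronskian-type expression
`W(u) = A(u+x) A'(u+t) - A'(u+x) A(u+t)`. Since `A'' = vA`, differentiating gives
`W'(u) = -A(u+x) (v(u+x) - v(u+t)) A(u+t)`, and the decay hypothesis (with `ζ = 2u + x + t`,
`η = x - t`) says `W(u) → 0` as `u → ∞`. The fundamental theorem of calculus on `(0, ∞)` then
expresses `W(0) = π (x - t) k(x, t)` as the integral of `-W'`.
-/

open Set Filter Topology MeasureTheory

def shiftedWronskian (A A' : ℝ → ℝ) (x t u : ℝ) : ℝ :=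
  A (u + x) * A' (u + t) - A' (u + x) * A (u + t)

section

variable {v A A' A'' : ℝ → ℝ} {x t : ℝ}

theorem hasDerivAt_shiftedWronskian {u : ℝ}
    (hA : ∀ y ∈ Ioi (0 : ℝ), HasDerivAt A (A' y) y)
    (hA' : ∀ y ∈ Ioi (0 : ℝ), HasDerivAt A' (A'' y) y)
    (heq : ∀ y ∈ Ioi (0 : ℝ), A'' y = v y * A y) (hx : 0 < u + x) (ht : 0 < u + t) :
    HasDerivAt (shiftedWronskian A A' x t)
      (-(A (u + x) * (v (u + x) - v (u + t)) * A (u + t))) u := by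
  have h := ((hA _ hx).comp_add_const u x).mul ((hA' _ ht).comp_add_const u t) |>.sub
    (((hA' _ hx).comp_add_const u x).mul ((hA _ ht).comp_add_const u t))
  refine h.congr_deriv ?_
  rw [heq _ hx, heq _ ht]
  ring

theorem tendsto_shiftedWronskian_atTop {k : ℝ → ℝ → ℝ} (hxt : x ≠ t)
    (hk : ∀ x t : ℝ, x ≠ t → k x t = (A x * A' t - A' x * A t) / (Real.pi * (x - t)))
    (hlim : Tendsto (fun ζ => k ((ζ + (x - t)) / 2) ((ζ - (x - t)) / 2)) atTop (𝓝 0)) :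
    Tendsto (shiftedWronskian A A' x t) atTop (𝓝 0) := by
  have hζ : Tendsto (fun u : ℝ => 2 * u + (x + t)) atTop atTop :=
    tendsto_atTop_add_const_right _ _ (tendsto_id.const_mul_atTop two_pos)
  have hk_shift : Tendsto (fun u => k (u + x) (u + t) * (Real.pi * (x - t))) atTop (𝓝 0) := by
    simpa using ((hlim.comp hζ).congr fun u => by
      simp only [Function.comp_apply]; congr 1 <;> ring).mul_const (Real.pi * (x - t))
  refine hk_shift.congr fun u => ?_
  have hπ : Real.pi * (x - t) ≠ 0 := mul_ne_zero Real.pi_ne_zero (sub_ne_zero.mpr hxt)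
  rw [hk _ _ (by simpa using hxt), add_sub_add_left_eq_sub, div_mul_cancel₀ _ hπ]
  rfl

theorem integral_Ioi_eq_shiftedWronskian_zero
    (hA : ∀ y ∈ Ioi (0 : ℝ), HasDerivAt A (A' y) y)
    (hA' : ∀ y ∈ Ioi (0 : ℝ), HasDerivAt A' (A'' y) y)
    (heq : ∀ y ∈ Ioi (0 : ℝ), A'' y = v y * A y) (hx : 0 < x) (ht : 0 < t)
    (hint : IntegrableOn (fun u => A (u + x) * (v (u + x) - v (u + t)) * A (u + t)) (Ioi 0))
    (hW : Tendsto (shiftedWronskian A A' x t) atTop (𝓝 0)) :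
    ∫ u in Ioi 0, A (u + x) * (v (u + x) - v (u + t)) * A (u + t) =
      shiftedWronskian A A' x t 0 := by
  have hderiv : ∀ u ∈ Ici (0 : ℝ), HasDerivAt (shiftedWronskian A A' x t)
      (-(A (u + x) * (v (u + x) - v (u + t)) * A (u + t))) u := fun u hu =>
    hasDerivAt_shiftedWronskian hA hA' heq (by linarith [mem_Ici.mp hu])
      (by linarith [mem_Ici.mp hu])
  have hftc := integral_Ioi_of_hasDerivAt_of_tendsto
    (hderiv 0 self_mem_Ici).continuousAt.continuousWithinAt
    (fun u hu => hderiv u (Ioi_subset_Ici_self hu)) hint.neg hW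
  rw [integral_neg] at hftc
  linarith

end

theorem stmt_17_general (v A A' A'' : ℝ → ℝ)
    (hderiv1 : ∀ x ∈ Set.Ioi (0 : ℝ), HasDerivAt A (A' x) x)
    (hderiv2 : ∀ x ∈ Set.Ioi (0 : ℝ), HasDerivAt A' (A'' x) x)
    (heq : ∀ x ∈ Set.Ioi (0 : ℝ), A'' x = v x * A x)
    (k : ℝ → ℝ → ℝ)
    (hk : ∀ x t : ℝ, x ≠ t →
      k x t = (A x * A' t - A' x * A t) / (Real.pi * (x - t)))
    (hint : ∀ x ∈ Set.Ioi (0 : ℝ), ∀ t ∈ Set.Ioi (0 : ℝ), x ≠ t →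
      MeasureTheory.IntegrableOn
        (fun u => A (u + x) * (v (u + x) - v (u + t)) * A (u + t)) (Set.Ioi 0))
    (hlim : ∀ η : ℝ, η ≠ 0 →
      Filter.Tendsto (fun ζ => k ((ζ + η) / 2) ((ζ - η) / 2))
        Filter.atTop (nhds 0)) :
    ∀ x ∈ Set.Ioi (0 : ℝ), ∀ t ∈ Set.Ioi (0 : ℝ), x ≠ t →
      k x t = ∫ u in Set.Ioi (0 : ℝ),
        A (u + x) * ((v (u + x) - v (u + t)) / (Real.pi * (x - t))) * A (u + t) := by
  intro x hx t ht hxt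
  have hW := tendsto_shiftedWronskian_atTop hxt hk (hlim (x - t) (sub_ne_zero.mpr hxt))
  calc k x t = shiftedWronskian A A' x t 0 / (Real.pi * (x - t)) := by
        simp [hk x t hxt, shiftedWronskian]
    _ = (∫ u in Ioi 0, A (u + x) * (v (u + x) - v (u + t)) * A (u + t)) /
          (Real.pi * (x - t)) := by
        rw [integral_Ioi_eq_shiftedWronskian_zero hderiv1 hderiv2 heq hx ht
          (hint x hx t ht hxt) hW]
    _ = _ := by
        rw [← integral_div]
        congr 1 with u
        ring

/-- Corollary 10.4 (formula (10.12)): under an integrability condition and the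
decay condition `k((ζ+η)/2, (ζ-η)/2) → 0` as `ζ → +∞`, the
Christoffel–Darboux type kernel of a solution of `A'' = vA` on `(0, ∞)` has
the integral representation
`k(x,t) = ∫₀^∞ A(u+x)·((v(u+x) - v(u+t))/(π(x - t)))·A(u+t) du`. -/
theorem stmt_17 (v A A' A'' : ℝ → ℝ)
    (hv : ContinuousOn v (Set.Ioi 0))
    (hderiv1 : ∀ x ∈ Set.Ioi (0 : ℝ), HasDerivAt A (A' x) x)
    (hderiv2 : ∀ x ∈ Set.Ioi (0 : ℝ), HasDerivAt A' (A'' x) x)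
    (hcont : ContinuousOn A'' (Set.Ioi 0))
    (heq : ∀ x ∈ Set.Ioi (0 : ℝ), A'' x = v x * A x)
    (k : ℝ → ℝ → ℝ)
    (hk : ∀ x t : ℝ, x ≠ t →
      k x t = (A x * A' t - A' x * A t) / (Real.pi * (x - t)))
    (hint : ∀ x ∈ Set.Ioi (0 : ℝ), ∀ t ∈ Set.Ioi (0 : ℝ), x ≠ t →
      MeasureTheory.IntegrableOn
        (fun u => A (u + x) * (v (u + x) - v (u + t)) * A (u + t)) (Set.Ioi 0))
    (hlim : ∀ η : ℝ, η ≠ 0 →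
      Filter.Tendsto (fun ζ => k ((ζ + η) / 2) ((ζ - η) / 2))
        Filter.atTop (nhds 0)) :
    ∀ x ∈ Set.Ioi (0 : ℝ), ∀ t ∈ Set.Ioi (0 : ℝ), x ≠ t →
      k x t = ∫ u in Set.Ioi (0 : ℝ),
        A (u + x) * ((v (u + x) - v (u + t)) / (Real.pi * (x - t))) * A (u + t) :=
  stmt_17_general v A A' A'' hderiv1 hderiv2 heq k hk hint hlim
end

section
/- Let G and H be complex Hilbert spaces, A a bounded operator on H, Π a bounded operator from G to H, and J a bounded operator on G with J = J* and J² = I, such that A − A* = iΠJΠ*. For z ∈ ℂ not in the spectrum of A, define W(z) = I − iJΠ*(A − zI)⁻¹Π. Then for every z ∈ ℂ such that both z and conj(z) lie outside the spectrum of A, one has W(conj(z))* J W(z) = J. -/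
open ContinuousLinearMap

/-- Auxiliary ring computation: if `J * J = 1` and `p * (J * q) = -i•p + i•q`,
then `(1 + i•(p*J)) * (J * (1 - i•(J*q))) = J`. -/
lemma stmt_18_aux {G : Type*} [NormedAddCommGroup G] [InnerProductSpace ℂ G]
    [CompleteSpace G] (J p q : G →L[ℂ] G) (hJ2 : J * J = 1)
    (hpq : p * (J * q) = (-Complex.I) • p + Complex.I • q) :
    (1 + Complex.I • (p * J)) * (J * (1 - Complex.I • (J * q))) = J := by
  have h1 : J * (1 - Complex.I • (J * q)) = J - Complex.I • q := by
    rw [mul_sub, mul_one, mul_smul_comm, ← mul_assoc, hJ2, one_mul]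
  rw [h1, add_mul, one_mul, mul_sub, smul_mul_assoc, mul_assoc, hJ2, mul_one,
    smul_mul_assoc, mul_smul_comm, mul_assoc, hpq, smul_smul, Complex.I_mul_I]
  module

/-- The J-symmetry property (n7) of the characteristic operator function
`W(z) = I - iJΦ*(A - zI)⁻¹Φ` of an operator `A` satisfying the node identity
`A - A* = iΦJΦ*`: for `z` and `conj z` outside the spectrum of `A`,
`W(conj z)* J W(z) = J`. -/
theorem stmt_18 {G H : Type*}
    [NormedAddCommGroup G] [InnerProductSpace ℂ G] [CompleteSpace G]
    [NormedAddCommGroup H] [InnerProductSpace ℂ H] [CompleteSpace H]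
    (A : H →L[ℂ] H) (Φ : G →L[ℂ] H) (J : G →L[ℂ] G)
    (hJsa : IsSelfAdjoint J) (hJ2 : J ∘L J = 1)
    (hnode : A - adjoint A = Complex.I • (Φ ∘L J ∘L adjoint Φ))
    (W : ℂ → (G →L[ℂ] G))
    (hW : ∀ z : ℂ, z ∉ spectrum ℂ A →
      W z = 1 - Complex.I •
        (J ∘L adjoint Φ ∘L Ring.inverse (A - z • (1 : H →L[ℂ] H)) ∘L Φ)) :
    ∀ z : ℂ, z ∉ spectrum ℂ A → (starRingEnd ℂ) z ∉ spectrum ℂ A →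
      adjoint (W ((starRingEnd ℂ) z)) ∘L J ∘L W z = J := by
  intro z hz hz'
  set c := (starRingEnd ℂ) z with hc
  -- `A - z•1` and `A - c•1` are invertible
  have hUz : IsUnit (A - z • (1 : H →L[ℂ] H)) := by
    have h := (spectrum.notMem_iff.mp hz).neg
    rw [Algebra.algebraMap_eq_smul_one, neg_sub] at h
    exact h
  have hUc : IsUnit (A - c • (1 : H →L[ℂ] H)) := by
    have h := (spectrum.notMem_iff.mp hz').neg
    rw [Algebra.algebraMap_eq_smul_one, neg_sub] at h
    exact h
  set R := Ring.inverse (A - z • (1 : H →L[ℂ] H)) with hRdef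
  set R' := Ring.inverse (A - c • (1 : H →L[ℂ] H)) with hR'def
  set S := adjoint R' with hSdef
  have hBR : (A - z • (1 : H →L[ℂ] H)) * R = 1 := Ring.mul_inverse_cancel _ hUz
  have hB'R' : (A - c • (1 : H →L[ℂ] H)) * R' = 1 := Ring.mul_inverse_cancel _ hUc
  -- the adjoint of `R'` is a (two-sided) inverse of `A* - z•1`
  have hstarB' : star (A - c • (1 : H →L[ℂ] H)) = adjoint A - z • 1 := by
    rw [star_sub, star_smul, star_one, Complex.star_def, hc, Complex.conj_conj,
      star_eq_adjoint]
  have hSC : S * (adjoint A - z • (1 : H →L[ℂ] H)) = 1 := by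
    have h := congrArg star hB'R'
    rwa [star_mul, star_one, hstarB', star_eq_adjoint, ← hSdef] at h
  -- the adjoint of `W (conj z)`
  have hadj : adjoint (1 - Complex.I • (J ∘L adjoint Φ ∘L R' ∘L Φ)) =
      1 + Complex.I • ((adjoint Φ ∘L (S ∘L Φ)) ∘L J) := by
    rw [← star_eq_adjoint, star_sub, star_one, star_smul, Complex.star_def,
      Complex.conj_I, neg_smul, sub_neg_eq_add, star_eq_adjoint,
      adjoint_comp, adjoint_comp, adjoint_comp, adjoint_adjoint, hJsa.adjoint_eq, ← hSdef]
    simp only [comp_assoc]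
  set p : G →L[ℂ] G := adjoint Φ ∘L (S ∘L Φ) with hp
  set q : G →L[ℂ] G := adjoint Φ ∘L (R ∘L Φ) with hq
  -- the key identity coming from the node relation `A - A* = iΦJΦ*`
  have hN : Φ ∘L (J ∘L adjoint Φ) = (-Complex.I) • (A - adjoint A) := by
    rw [hnode, smul_smul]
    norm_num [Complex.I_mul_I]
  have hmid : S ∘L ((Φ ∘L (J ∘L adjoint Φ)) ∘L R)
      = (-Complex.I) • S + Complex.I • R := by
    rw [hN]
    have hAA : A - adjoint A
        = (A - z • (1 : H →L[ℂ] H)) - (adjoint A - z • (1 : H →L[ℂ] H)) := by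
      abel
    calc S ∘L (((-Complex.I) • (A - adjoint A)) ∘L R)
        = (-Complex.I) • (S * (A - adjoint A) * R) := by
          simp only [smul_comp, comp_smul, mul_def, ← comp_assoc]
      _ = (-Complex.I) • (S * ((A - z • (1 : H →L[ℂ] H)) * R)
            - (S * (adjoint A - z • (1 : H →L[ℂ] H))) * R) := by
          rw [hAA]; congr 1; rw [mul_sub, sub_mul, mul_assoc]
      _ = (-Complex.I) • (S - R) := by rw [hBR, hSC, mul_one, one_mul]
      _ = (-Complex.I) • S + Complex.I • R := by
          rw [smul_sub]; module
  have hpq : p * (J * q) = (-Complex.I) • p + Complex.I • q := by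
    calc p * (J * q)
        = adjoint Φ ∘L ((S ∘L ((Φ ∘L (J ∘L adjoint Φ)) ∘L R)) ∘L Φ) := by
          rw [hp, hq]; simp only [mul_def, comp_assoc]
      _ = _ := by
          rw [hmid, hp, hq]
          simp only [add_comp, smul_comp, comp_add, comp_smul, comp_assoc]
  -- the final computation in the ring of operators on `G`
  rw [hW z hz, hW c hz', hadj]
  simp only [← mul_def]
  rw [← hq]
  exact stmt_18_aux J p q hJ2 hpq
end
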